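/- arXiv:1802.09289 — 7 statements merged into one kernel-verified Lean document; each statement's English description precedes it below -/
import Mathlib

section
/- Let q be a prime power and let g ∈ SL₂(F_q) be an element whose eigenvalue λ ∈ F_{q²} satisfies λ = ±1 and g ≠ ±id. Then the induced permutation ḡ ∈ PSL₂(q) acting on the projective line P¹(F_q) has exactly one fixed point, and all its other cycles have length p, where p is the characteristic of F_q. -/
/-- The permutation of the projective line `ℙ¹(F)` induced by an element of `SL₂(F)`. -/
noncomputable def SL2.projAction {F : Type} [Field F]
    (g : Matrix.SpecialLinearGroup (Fin 2) F) :
    Projectivization F (Fin 2 → F) → Projectivization F (Fin 2 → F) :=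
  Projectivization.map (Matrix.SpecialLinearGroup.toLin' g).toLinearMap
    (Matrix.SpecialLinearGroup.toLin' g).injective

namespace SL2Aux

variable {F : Type} [Field F]

lemma mulVec_ne_zero (g : Matrix.SpecialLinearGroup (Fin 2) F) {v : Fin 2 → F} (hv : v ≠ 0) :
    (g : Matrix (Fin 2) (Fin 2) F).mulVec v ≠ 0 := by
  intro h
  apply hv
  have := (Matrix.SpecialLinearGroup.toLin' g).injective (a₁ := v) (a₂ := 0)
  simp only [map_zero] at this
  apply this
  show Matrix.toLin' (g : Matrix (Fin 2) (Fin 2) F) v = 0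
  rw [Matrix.toLin'_apply, h]

lemma projAction_mk (g : Matrix.SpecialLinearGroup (Fin 2) F) (v : Fin 2 → F) (hv : v ≠ 0) :
    SL2.projAction g (Projectivization.mk F v hv) =
      Projectivization.mk F ((g : Matrix (Fin 2) (Fin 2) F).mulVec v) (mulVec_ne_zero g hv) := by
  rw [SL2.projAction, Projectivization.map_mk]
  congr 1

lemma projAction_scalar (g : Matrix.SpecialLinearGroup (Fin 2) F) (c : F)
    (h : (g : Matrix (Fin 2) (Fin 2) F) = c • (1 : Matrix (Fin 2) (Fin 2) F))
    (x : Projectivization F (Fin 2 → F)) : SL2.projAction g x = x := by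
  induction x using Projectivization.ind with
  | h v hv =>
    rw [projAction_mk, Projectivization.mk_eq_mk_iff']
    refine ⟨c, ?_⟩
    rw [h, Matrix.smul_mulVec, Matrix.one_mulVec]

lemma projAction_mul (g h : Matrix.SpecialLinearGroup (Fin 2) F)
    (x : Projectivization F (Fin 2 → F)) :
    SL2.projAction (g * h) x = SL2.projAction g (SL2.projAction h x) := by
  induction x using Projectivization.ind with
  | h v hv =>
    rw [projAction_mk, projAction_mk, projAction_mk]
    congr 1
    rw [Matrix.SpecialLinearGroup.coe_mul, ← Matrix.mulVec_mulVec]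

lemma projAction_iterate (g : Matrix.SpecialLinearGroup (Fin 2) F) (n : ℕ)
    (x : Projectivization F (Fin 2 → F)) :
    (SL2.projAction g)^[n] x = SL2.projAction (g ^ n) x := by
  induction n generalizing x with
  | zero =>
    simp only [Function.iterate_zero, id_eq, pow_zero]
    exact (projAction_scalar 1 1 (by simp) x).symm
  | succ n ih =>
    rw [Function.iterate_succ_apply, ih, ← projAction_mul, pow_succ]

end SL2Aux

/-- If `g ∈ SL₂(F_q)` has eigenvalue `λ = ±1` (equivalently, trace `±2`)
and `g ≠ ±1`, then the induced permutation of the projective line has exactly one fixed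
point and all other cycles have length `p = char F_q`. -/
theorem sl2_unipotent_cycle_structure
    (F : Type) [Field F] [Fintype F]
    (g : Matrix.SpecialLinearGroup (Fin 2) F)
    (htr : (g : Matrix (Fin 2) (Fin 2) F).trace = 2 ∨
           (g : Matrix (Fin 2) (Fin 2) F).trace = -2)
    (hg : g ≠ 1 ∧ g ≠ -1) :
    (∃! x : Projectivization F (Fin 2 → F), SL2.projAction g x = x) ∧
    (∀ x : Projectivization F (Fin 2 → F), SL2.projAction g x ≠ x →
      Function.minimalPeriod (SL2.projAction g) x = ringChar F) := by
  classical
  obtain ⟨ε, hε2, htr'⟩ : ∃ ε : F, ε ^ 2 = 1 ∧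
      (g : Matrix (Fin 2) (Fin 2) F).trace = 2 * ε := by
    rcases htr with h | h
    · exact ⟨1, one_pow 2, by rw [h]; ring⟩
    · exact ⟨-1, by ring, by rw [h]; ring⟩
  set M : Matrix (Fin 2) (Fin 2) F := (g : Matrix (Fin 2) (Fin 2) F) with hM
  have hdet' : M 0 0 * M 1 1 - M 0 1 * M 1 0 = 1 := by
    rw [← Matrix.det_fin_two]; exact g.2
  have htrace : M 0 0 + M 1 1 = 2 * ε := by
    rw [← Matrix.trace_fin_two]; exact htr'
  have hεne : ε ≠ 0 := by
    intro h; rw [h] at hε2; simp at hε2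
  have hgne : M ≠ ε • (1 : Matrix (Fin 2) (Fin 2) F) := by
    intro h
    have h0 : (ε - 1) * (ε + 1) = 0 := by linear_combination hε2
    rcases mul_eq_zero.1 h0 with h1 | h1
    · have h1 : ε = 1 := sub_eq_zero.1 h1
      exact hg.1 (Subtype.ext (by
        rw [Matrix.SpecialLinearGroup.coe_one, ← hM, h, h1, one_smul]))
    · have h1 : ε = -1 := by linear_combination h1
      exact hg.2 (Subtype.ext (by
        rw [Matrix.SpecialLinearGroup.coe_neg, Matrix.SpecialLinearGroup.coe_one, ← hM, h, h1,
          neg_smul, one_smul]))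
  -- Step A: any eigenvalue is ε
  have stepA : ∀ (w : Fin 2 → F), w ≠ 0 → ∀ c : F, M.mulVec w = c • w → c = ε := by
    intro w hw c hcw
    have h0 : (M - c • 1).mulVec w = 0 := by
      rw [Matrix.sub_mulVec, Matrix.smul_mulVec, Matrix.one_mulVec, hcw, sub_self]
    have hdet0 : (M - c • 1).det = 0 :=
      Matrix.exists_mulVec_eq_zero_iff.1 ⟨w, hw, h0⟩
    have hsq : (c - ε) ^ 2 = 0 := by
      rw [Matrix.det_fin_two] at hdet0
      simp only [Matrix.sub_apply, Matrix.smul_apply, Matrix.one_apply_eq,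
        Matrix.one_apply_ne (by decide : (0 : Fin 2) ≠ 1),
        Matrix.one_apply_ne (by decide : (1 : Fin 2) ≠ 0), smul_eq_mul, mul_one,
        mul_zero, sub_zero] at hdet0
      linear_combination hdet0 - hdet' + c * htrace + hε2
    have := pow_eq_zero_iff (n := 2) (by norm_num) |>.1 hsq
    exact sub_eq_zero.1 this
  -- the eigenvector and uniqueness of its line
  obtain ⟨v₀, hv₀, hfixv, huniq⟩ : ∃ (v₀ : Fin 2 → F) (_ : v₀ ≠ 0),
      (∃ c₀ : F, M.mulVec v₀ = c₀ • v₀) ∧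
      ∀ (w : Fin 2 → F), w ≠ 0 → M.mulVec w = ε • w → ∃ t : F, t • v₀ = w := by
    by_cases hb : M 0 1 ≠ 0
    · refine ⟨![M 0 1, ε - M 0 0], ?_, ⟨ε, ?_⟩, ?_⟩
      · intro h; exact hb (by simpa using congrFun h 0)
      · funext i
        fin_cases i <;>
          simp only [Matrix.mulVec, dotProduct, Fin.sum_univ_two, Pi.smul_apply,
            smul_eq_mul, Fin.zero_eta, Fin.mk_one, Matrix.cons_val_zero, Matrix.cons_val_one,
            Matrix.head_cons, Fin.isValue]
        · ring
        · linear_combination -hdet' + ε * htrace + hε2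
      · intro w hw hcw
        have e0 := congrFun hcw 0
        simp only [Matrix.mulVec, dotProduct, Fin.sum_univ_two, Pi.smul_apply,
          smul_eq_mul] at e0
        refine ⟨w 0 / M 0 1, ?_⟩
        funext i
        fin_cases i <;>
          simp only [Pi.smul_apply, smul_eq_mul, Fin.zero_eta, Fin.mk_one,
            Matrix.cons_val_zero, Matrix.cons_val_one, Matrix.head_cons, Fin.isValue]
        · field_simp
        · field_simp
          linear_combination -(1 : F) * e0
    · push_neg at hb
      refine ⟨![0, 1], ?_, ⟨M 1 1, ?_⟩, ?_⟩
      · intro h; simpa using congrFun h 1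
      · funext i
        fin_cases i <;>
          simp [Matrix.mulVec, dotProduct, Fin.sum_univ_two, hb]
      · intro w hw hcw
        have e0 := congrFun hcw 0
        have e1 := congrFun hcw 1
        simp only [Matrix.mulVec, dotProduct, Fin.sum_univ_two, Pi.smul_apply,
          smul_eq_mul, hb, zero_mul, add_zero] at e0 e1
        have hw0 : w 0 = 0 := by
          by_cases ha : M 0 0 = ε
          · have hd : M 1 1 = ε := by linear_combination htrace - ha
            have hγ : M 1 0 ≠ 0 := by
              intro hγ0
              apply hgne
              ext i j
              fin_cases i <;> fin_cases j <;>
                simp [hb, hγ0, ha, hd, Matrix.one_apply]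
            have : M 1 0 * w 0 = 0 := by linear_combination e1 - w 1 * hd
            exact (mul_eq_zero.1 this).resolve_left hγ
          · have : (M 0 0 - ε) * w 0 = 0 := by linear_combination e0
            exact (mul_eq_zero.1 this).resolve_left (sub_ne_zero.2 ha)
        refine ⟨w 1, ?_⟩
        funext i
        fin_cases i <;> simp [hw0]
  obtain ⟨c₀, hc₀⟩ := hfixv
  constructor
  · refine ⟨Projectivization.mk F v₀ hv₀, ?_, ?_⟩
    · show SL2.projAction g (Projectivization.mk F v₀ hv₀) = Projectivization.mk F v₀ hv₀
      rw [SL2Aux.projAction_mk, Projectivization.mk_eq_mk_iff']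
      exact ⟨c₀, hc₀.symm⟩
    · intro y hy
      have hy' : SL2.projAction g (Projectivization.mk F y.rep y.rep_nonzero) =
          Projectivization.mk F y.rep y.rep_nonzero := by
        rw [Projectivization.mk_rep]; exact hy
      rw [SL2Aux.projAction_mk, Projectivization.mk_eq_mk_iff'] at hy'
      obtain ⟨c, hc⟩ := hy'
      have hcε := stepA y.rep y.rep_nonzero c hc.symm
      obtain ⟨t, ht⟩ := huniq y.rep y.rep_nonzero (by rw [← hc, hcε])
      rw [← Projectivization.mk_rep y, Projectivization.mk_eq_mk_iff']
      exact ⟨t, ht⟩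
  · intro x hx
    set p := ringChar F with hp'
    haveI : CharP F p := ringChar.charP F
    have hp : p.Prime := CharP.char_is_prime F p
    haveI : Fact p.Prime := ⟨hp⟩
    -- nilpotency of N = M - ε • 1
    have hN2 : (M - ε • 1) * (M - ε • 1) = 0 := by
      ext i j
      fin_cases i <;> fin_cases j <;>
        simp only [Matrix.mul_apply, Fin.sum_univ_two, Matrix.sub_apply, Matrix.smul_apply,
          Matrix.one_apply_eq, Matrix.one_apply_ne (by decide : (0 : Fin 2) ≠ 1),
          Matrix.one_apply_ne (by decide : (1 : Fin 2) ≠ 0), smul_eq_mul, mul_one, mul_zero,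
          sub_zero, Matrix.zero_apply, Fin.isValue, Fin.zero_eta, Fin.mk_one]
      · linear_combination -hdet' + M 0 0 * htrace + hε2
      · linear_combination M 0 1 * htrace
      · linear_combination M 1 0 * htrace
      · linear_combination -hdet' + M 1 1 * htrace + hε2
    have hNp : (M - ε • 1) ^ p = 0 := by
      have h2p : 2 + (p - 2) = p := Nat.add_sub_cancel' hp.two_le
      calc (M - ε • 1) ^ p = (M - ε • 1) ^ 2 * (M - ε • 1) ^ (p - 2) := by
            rw [← pow_add, h2p]
        _ = 0 := by rw [pow_two, hN2, zero_mul]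
    have hMp : M ^ p = ε ^ p • 1 := by
      have hcomm : Commute (ε • (1 : Matrix (Fin 2) (Fin 2) F)) (M - ε • 1) :=
        (Commute.one_left _).smul_left ε
      have hsum : M = ε • (1 : Matrix (Fin 2) (Fin 2) F) + (M - ε • 1) := by abel
      rw [hsum, add_pow_char_of_commute _ hcomm, hNp, add_zero, smul_pow, one_pow]
    have hfixall : ∀ y : Projectivization F (Fin 2 → F),
        (SL2.projAction g)^[p] y = y := by
      intro y
      rw [SL2Aux.projAction_iterate]
      exact SL2Aux.projAction_scalar (g ^ p) (ε ^ p)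
        (by rw [Matrix.SpecialLinearGroup.coe_pow]; exact hMp) y
    have hper : Function.IsPeriodicPt (SL2.projAction g) p x := hfixall x
    rcases hp.eq_one_or_self_of_dvd _ hper.minimalPeriod_dvd with h1 | h1
    · exact absurd (Function.minimalPeriod_eq_one_iff_isFixedPt.1 h1) hx
    · exact h1
end

section
/- Let q be a prime power and g ∈ SL₂(F_q) be diagonalizable over F_q with an eigenvalue λ ∈ F_q \ {±1} of multiplicative order o. Then the permutation ḡ ∈ PSL₂(q) of the projective line P¹(F_q) has exactly two fixed points, and every other cycle of ḡ has length o/2 if o is even and length o if o is odd. -/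
open Module.End Projectivization

namespace Module.End

variable {R M : Type*} [CommRing R] [AddCommGroup M] [Module R M] {f : Module.End R M}

theorem HasEigenvector.pow {μ : R} {v : M} (hv : f.HasEigenvector μ v) (n : ℕ) :
    (f ^ n).HasEigenvector (μ ^ n) v :=
  ⟨mem_eigenspace_iff.2 (hv.pow_apply n), hv.2⟩

theorem HasEigenvalue.ne_zero_of_injective (hf : Function.Injective f) {μ : R}
    (hμ : f.HasEigenvalue μ) : μ ≠ 0 := by
  obtain ⟨v, hv⟩ := hμ.exists_hasEigenvector
  rintro rfl
  exact hv.2 (hf (by rw [hv.apply_eq_smul, zero_smul, map_zero]))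

end Module.End

namespace Projectivization

section DivisionRing

variable {K V : Type*} [DivisionRing K] [AddCommGroup V] [Module K V]

theorem iterate_map (f : V →ₗ[K] V) (hf : Function.Injective f) (n : ℕ) :
    (map f hf)^[n] = map (f ^ n) (by simpa only [Module.End.coe_pow] using hf.iterate n) := by
  induction n with
  | zero => exact map_id.symm
  | succ n ih =>
    rw [Function.iterate_succ', ih, ← map_comp]
    congr 1
    rw [pow_succ', Module.End.mul_eq_comp]

theorem map_mk_eq_self_iff (f : V →ₗ[K] V) (hf : Function.Injective f) {u : V} (hu : u ≠ 0) :
    map f hf (mk K u hu) = mk K u hu ↔ ∃ c : K, f u = c • u := by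
  rw [map_mk, mk_eq_mk_iff']
  exact exists_congr fun c => eq_comm

end DivisionRing

section Field

variable {K V : Type*} [Field K] [AddCommGroup V] [Module K V]
  {f : Module.End K V} (hf : Function.Injective f)

theorem map_mk_eq_self_of_hasEigenvector {μ : K} {v : V} (hv : f.HasEigenvector μ v) :
    map f hf (mk K v hv.2) = mk K v hv.2 :=
  (map_mk_eq_self_iff f hf hv.2).2 ⟨μ, hv.apply_eq_smul⟩

theorem map_eq_self_iff_of_hasEigenvector {α β : K} {v w : V} (hv : f.HasEigenvector α v)
    (hw : f.HasEigenvector β w) (hvw : LinearIndependent K ![v, w])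
    (hspan : Submodule.span K {v, w} = ⊤) {x : Projectivization K V} (hxv : x ≠ mk K v hv.2)
    (hxw : x ≠ mk K w hw.2) :
    map f hf x = x ↔ α = β := by
  induction x using Projectivization.ind with | h u hu => ?_
  obtain ⟨a, b, rfl⟩ := Submodule.mem_span_pair.1 (hspan ▸ Submodule.mem_top (x := u))
  have ha : a ≠ 0 := by
    rintro rfl
    exact hxw ((mk_eq_mk_iff' K _ _ hu hw.2).2 ⟨b, by simp⟩)
  have hb : b ≠ 0 := by
    rintro rfl
    exact hxv ((mk_eq_mk_iff' K _ _ hu hv.2).2 ⟨a, by simp⟩)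
  have hfu : f (a • v + b • w) = (α * a) • v + (β * b) • w := by
    simp only [map_add, map_smul, hv.apply_eq_smul, hw.apply_eq_smul, smul_smul, mul_comm]
  rw [map_mk_eq_self_iff, hfu]
  constructor
  · rintro ⟨c, hc⟩
    rw [smul_add, smul_smul, smul_smul] at hc
    obtain ⟨h₁, h₂⟩ := hvw.eq_of_pair hc
    rw [mul_right_cancel₀ ha h₁, mul_right_cancel₀ hb h₂]
  · rintro rfl
    exact ⟨α, by module⟩

end Field

end Projectivization

theorem Matrix.hasEigenvalue_toLin'_inv_of_det_eq_one {K : Type*} [Field K]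
    {A : Matrix (Fin 2) (Fin 2) K} (hA : A.det = 1) {μ : K}
    (hμ : HasEigenvalue (Matrix.toLin' A) μ) : HasEigenvalue (Matrix.toLin' A) μ⁻¹ := by
  -- the characteristic polynomial `X² - tX + 1` is palindromic
  rw [hasEigenvalue_iff_isRoot_charpoly, Matrix.charpoly_toLin', Matrix.charpoly_fin_two,
    hA] at hμ ⊢
  simp only [Polynomial.IsRoot, Polynomial.eval_add, Polynomial.eval_sub, Polynomial.eval_pow,
    Polynomial.eval_mul, Polynomial.eval_X, Polynomial.eval_C] at *
  have hμ0 : μ ≠ 0 := by rintro rfl; simp at hμ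
  field_simp
  linear_combination hμ

theorem Matrix.SpecialLinearGroup.exists_eigenvector_pair_of_sq_ne_one {K : Type*} [Field K]
    (g : Matrix.SpecialLinearGroup (Fin 2) K) {μ : K}
    (hμ : HasEigenvalue (Matrix.toLin' (g : Matrix (Fin 2) (Fin 2) K)) μ) (hμ2 : μ ^ 2 ≠ 1) :
    ∃ v w : Fin 2 → K, HasEigenvector (Matrix.toLin' (g : Matrix (Fin 2) (Fin 2) K)) μ v ∧
      HasEigenvector (Matrix.toLin' (g : Matrix (Fin 2) (Fin 2) K)) μ⁻¹ w ∧
      LinearIndependent K ![v, w] ∧ Submodule.span K {v, w} = ⊤ := by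
  obtain ⟨v, hv⟩ := hμ.exists_hasEigenvector
  obtain ⟨w, hw⟩ := (Matrix.hasEigenvalue_toLin'_inv_of_det_eq_one g.2 hμ).exists_hasEigenvector
  have hμ0 : μ ≠ 0 := hμ.ne_zero_of_injective (Matrix.SpecialLinearGroup.toLin' g).injective
  have hμμ : μ ≠ μ⁻¹ := by rwa [Ne, ← mul_eq_one_iff_eq_inv₀ hμ0, ← sq]
  have hvw : LinearIndependent K ![v, w] :=
    eigenvectors_linearIndependent' _ ![μ, μ⁻¹] (injective_pair_iff_ne.2 hμμ) _
      (Fin.forall_fin_two.2 ⟨hv, hw⟩)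
  refine ⟨v, w, hv, hw, hvw, ?_⟩
  rw [← Matrix.range_cons_cons_empty v w ![]]
  exact hvw.span_eq_top_of_card_eq_finrank' (by simp)

theorem orderOf_sq {G : Type*} [Monoid G] (x : G) :
    orderOf (x ^ 2) = if Even (orderOf x) then orderOf x / 2 else orderOf x := by
  rw [orderOf_pow' x two_ne_zero]
  split_ifs with h
  · rw [Nat.gcd_eq_right (even_iff_two_dvd.1 h)]
  · rw [(Nat.not_even_iff_odd.1 h).coprime_two_right, Nat.div_one]

theorem sl2_split_semisimple_cycle_structure_general
    (F : Type) [Field F]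
    (g : Matrix.SpecialLinearGroup (Fin 2) F) (lam : F)
    (hlam1 : lam ≠ 1) (hlam2 : lam ≠ -1)
    (heig : Module.End.HasEigenvalue
      (Matrix.toLin' (g : Matrix (Fin 2) (Fin 2) F)) lam) :
    (∃ a b : Projectivization F (Fin 2 → F), a ≠ b ∧
      (∀ x, SL2.projAction g x = x ↔ x = a ∨ x = b)) ∧
    (∀ x : Projectivization F (Fin 2 → F), SL2.projAction g x ≠ x →
      Function.minimalPeriod (SL2.projAction g) x =
        if Even (orderOf lam) then orderOf lam / 2 else orderOf lam) := by
  set f := Matrix.toLin' (g : Matrix (Fin 2) (Fin 2) F)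
  have hf : Function.Injective f := (Matrix.SpecialLinearGroup.toLin' g).injective
  have hP : SL2.projAction g = map f hf := rfl
  have hlam0 : lam ≠ 0 := heig.ne_zero_of_injective hf
  have hsq : lam ^ 2 ≠ 1 := by simp [sq_eq_one_iff, hlam1, hlam2]
  obtain ⟨v, w, hv, hw, hvw, hspan⟩ := g.exists_eigenvector_pair_of_sq_ne_one heig hsq
  have hper : ∀ x, x ≠ mk F v hv.2 → x ≠ mk F w hw.2 →
      ∀ n, Function.IsPeriodicPt (SL2.projAction g) n x ↔ (lam ^ 2) ^ n = 1 := by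
    intro x hxv hxw n
    rw [Function.IsPeriodicPt, Function.IsFixedPt, hP, iterate_map,
      map_eq_self_iff_of_hasEigenvector _ (hv.pow n) (hw.pow n) hvw hspan hxv hxw, inv_pow,
      ← mul_eq_one_iff_eq_inv₀ (pow_ne_zero n hlam0), ← sq, pow_right_comm]
  have hfix : ∀ x, SL2.projAction g x = x ↔ x = mk F v hv.2 ∨ x = mk F w hw.2 := by
    refine fun x => ⟨fun hx => ?_, ?_⟩
    · by_contra! h
      exact hsq (by simpa using (hper x h.1 h.2 1).1 hx)
    · rintro (rfl | rfl)
      exacts [map_mk_eq_self_of_hasEigenvector hf hv, map_mk_eq_self_of_hasEigenvector hf hw]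
  refine ⟨⟨_, _, (independent_pair_iff_ne _ _).1
    ((independent_mk_iff_LinearIndependent _ _).2 hvw), hfix⟩, fun x hx => ?_⟩
  rw [Ne, hfix, not_or] at hx
  rw [← orderOf_sq]
  exact Nat.dvd_right_iff_eq.1 fun n => by
    rw [← Function.isPeriodicPt_iff_minimalPeriod_dvd, hper x hx.1 hx.2, orderOf_dvd_iff_pow_eq_one]

/-- If `g ∈ SL₂(F_q)` has an eigenvalue `λ ∈ F_q \ {±1}` of multiplicative
order `o` (so `g` is diagonalizable over `F_q`), then the induced permutation of the
projective line has exactly two fixed points and every other cycle has length `o/2` if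
`o` is even and `o` if `o` is odd. -/
theorem sl2_split_semisimple_cycle_structure
    (F : Type) [Field F] [Fintype F]
    (g : Matrix.SpecialLinearGroup (Fin 2) F) (lam : F)
    (hlam1 : lam ≠ 1) (hlam2 : lam ≠ -1)
    (heig : Module.End.HasEigenvalue
      (Matrix.toLin' (g : Matrix (Fin 2) (Fin 2) F)) lam) :
    (∃ a b : Projectivization F (Fin 2 → F), a ≠ b ∧
      (∀ x, SL2.projAction g x = x ↔ x = a ∨ x = b)) ∧
    (∀ x : Projectivization F (Fin 2 → F), SL2.projAction g x ≠ x →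
      Function.minimalPeriod (SL2.projAction g) x =
        if Even (orderOf lam) then orderOf lam / 2 else orderOf lam) :=
  sl2_split_semisimple_cycle_structure_general F g lam hlam1 hlam2 heig
end

section
/- Let q be a prime power and g ∈ SL₂(F_q) with eigenvalues λ, λ⁻¹ ∈ F_{q²} \ F_q. Then λ⁻¹ = λ^q, the order o of λ divides q+1, the permutation ḡ ∈ PSL₂(q) of the projective line P¹(F_q) has no fixed points, and all cycles of ḡ have length o/2 if o is even and length o if o is odd. -/
open Polynomial in
private lemma SL2aux.mem_range_of_pow_card (F E : Type) [Field F] [Fintype F] [Field E]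
    [Algebra F E] (x : E) (hx : x ^ (Fintype.card F) = x) :
    x ∈ Set.range (algebraMap F E) := by
  classical
  have hq2 : 1 < Fintype.card F := Fintype.one_lt_card
  have hdegX : (X : E[X]).degree < ((X : E[X]) ^ Fintype.card F).degree := by
    rw [degree_X_pow, degree_X]
    exact_mod_cast hq2
  have hPdeg : ((X : E[X]) ^ Fintype.card F - X).degree = (Fintype.card F : WithBot ℕ) := by
    rw [degree_sub_eq_left_of_degree_lt hdegX, degree_X_pow]
  have hP0 : ((X : E[X]) ^ Fintype.card F - X) ≠ 0 := by
    intro h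
    rw [h, degree_zero] at hPdeg
    exact (by simp : (⊥ : WithBot ℕ) ≠ (Fintype.card F : WithBot ℕ)) hPdeg
  have hNdeg : ((X : E[X]) ^ Fintype.card F - X).natDegree = Fintype.card F :=
    natDegree_eq_of_degree_eq_some hPdeg
  have hScard : (Finset.univ.image (algebraMap F E)).card = Fintype.card F := by
    rw [Finset.card_image_of_injective _ (algebraMap F E).injective, Finset.card_univ]
  have hsub : (Finset.univ.image (algebraMap F E)) ⊆
      ((X : E[X]) ^ Fintype.card F - X).roots.toFinset := by
    intro s hs
    obtain ⟨c, -, rfl⟩ := Finset.mem_image.mp hs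
    rw [Multiset.mem_toFinset, mem_roots hP0]
    have hcq : c ^ Fintype.card F = c := FiniteField.pow_card c
    simp [IsRoot, ← map_pow, hcq]
  have hcard : ((X : E[X]) ^ Fintype.card F - X).roots.toFinset.card ≤ Fintype.card F := by
    refine le_trans (Multiset.toFinset_card_le _) ?_
    exact le_trans (card_roots' _) (le_of_eq hNdeg)
  have heq : (Finset.univ.image (algebraMap F E)) =
      ((X : E[X]) ^ Fintype.card F - X).roots.toFinset :=
    Finset.eq_of_subset_of_card_le hsub (by rw [hScard]; exact hcard)
  have hx' : x ∈ Finset.univ.image (algebraMap F E) := by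
    rw [heq, Multiset.mem_toFinset, mem_roots hP0]
    simp [IsRoot, hx]
  obtain ⟨c, -, hc⟩ := Finset.mem_image.mp hx'
  exact ⟨c, hc⟩

private lemma SL2aux.classify (E : Type) [Field E] (t lam μ : E)
    (hq : lam ^ 2 - t * lam + 1 = 0) (hμ : μ ^ 2 - t * μ + 1 = 0) :
    μ = lam ∨ μ = lam⁻¹ := by
  have hlam0 : lam ≠ 0 := by
    intro h; rw [h] at hq; simp at hq
  have hinv : lam⁻¹ = t - lam := by
    refine inv_eq_of_mul_eq_one_right ?_
    linear_combination -hq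
  have hz : (μ - lam) * (μ - lam⁻¹) = 0 := by
    rw [hinv]
    linear_combination hμ - hq
  rcases mul_eq_zero.mp hz with h | h
  · exact Or.inl (sub_eq_zero.mp h)
  · exact Or.inr (sub_eq_zero.mp h)

private lemma SL2aux.quad_of_eigen (F E : Type) [Field F] [Field E] [Algebra F E]
    (G : Matrix (Fin 2) (Fin 2) F) (hdet : G.det = 1) (μ : E) (u : Fin 2 → E)
    (hu : u ≠ 0) (huM : (G.map (algebraMap F E)).mulVec u = μ • u) :
    μ ^ 2 - (algebraMap F E (G 0 0) + algebraMap F E (G 1 1)) * μ + 1 = 0 := by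
  classical
  have hdetz : (G.map (algebraMap F E) - μ • 1).det = 0 := by
    rw [← Matrix.exists_mulVec_eq_zero_iff]
    refine ⟨u, hu, ?_⟩
    rw [Matrix.sub_mulVec, Matrix.smul_mulVec, Matrix.one_mulVec, huM, sub_self]
  rw [Matrix.det_fin_two] at hdetz
  simp only [Matrix.sub_apply, Matrix.smul_apply, Matrix.one_apply, Matrix.map_apply,
    smul_eq_mul, if_true, if_false, Fin.zero_eta, Fin.mk_one, ne_eq, zero_ne_one, one_ne_zero,
    mul_one, mul_zero, sub_zero, reduceIte] at hdetz
  have hdetE : algebraMap F E (G 0 0) * algebraMap F E (G 1 1)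
      - algebraMap F E (G 0 1) * algebraMap F E (G 1 0) = 1 := by
    rw [← map_mul, ← map_mul, ← map_sub]
    rw [Matrix.det_fin_two] at hdet
    rw [hdet, map_one]
  linear_combination hdetz - hdetE

private lemma SL2aux.pow_rep (F E : Type) [Field F] [Field E] [Algebra F E]
    (G : Matrix (Fin 2) (Fin 2) F) (hdet : G.det = 1) (lam : E)
    (hq : lam ^ 2 - (algebraMap F E (G 0 0) + algebraMap F E (G 1 1)) * lam + 1 = 0) :
    ∀ n : ℕ, ∃ α β : F, G ^ n = α • G + β • 1 ∧
      lam ^ n = algebraMap F E α * lam + algebraMap F E β ∧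
      (lam⁻¹) ^ n = algebraMap F E α * lam⁻¹ + algebraMap F E β := by
  have hdetF : G 0 0 * G 1 1 - G 0 1 * G 1 0 = 1 := by
    rw [← Matrix.det_fin_two]; exact hdet
  have hlam0 : lam ≠ 0 := by intro h; rw [h] at hq; simp at hq
  have hinv : lam⁻¹ = (algebraMap F E (G 0 0) + algebraMap F E (G 1 1)) - lam := by
    refine inv_eq_of_mul_eq_one_right ?_
    linear_combination -hq
  have hqinv : (lam⁻¹) ^ 2 - (algebraMap F E (G 0 0) + algebraMap F E (G 1 1)) * lam⁻¹ + 1 = 0 := by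
    rw [hinv]; linear_combination hq
  have hCH : G * G = (G 0 0 + G 1 1) • G - 1 := by
    ext i j
    fin_cases i <;> fin_cases j <;>
      simp [Matrix.mul_apply, Fin.sum_univ_two, Matrix.smul_apply, Matrix.sub_apply,
        Matrix.one_apply, smul_eq_mul] <;>
      first | linear_combination hdetF | linear_combination -hdetF | linear_combination 2*hdetF | linear_combination -2*hdetF | ring
  intro n
  induction n with
  | zero => exact ⟨0, 1, by simp, by simp, by simp⟩
  | succ n ih =>
    obtain ⟨α, β, h1, h2, h3⟩ := ih
    refine ⟨(G 0 0 + G 1 1) * α + β, -α, ?_, ?_, ?_⟩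
    · rw [pow_succ, h1, add_mul, Matrix.smul_mul, Matrix.smul_mul, Matrix.one_mul, hCH]
      module
    · simp only [map_add, map_mul, map_neg]
      linear_combination lam * h2 + algebraMap F E α * hq
    · simp only [map_add, map_mul, map_neg]
      linear_combination lam⁻¹ * h3 + algebraMap F E α * hqinv



/-- If `g ∈ SL₂(F_q)` has an eigenvalue `λ` lying in the quadratic
extension `E = F_{q²}` but not in `F_q`, then `λ⁻¹ = λ^q`, the order `o` of `λ`
divides `q + 1`, the induced permutation of the projective line `ℙ¹(F_q)` has no
fixed points, and all its cycles have length `o/2` if `o` is even and `o` otherwise. -/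
theorem sl2_nonsplit_semisimple_cycle_structure
    (F : Type) [Field F] [Fintype F]
    (E : Type) [Field E] [Algebra F E] (hE : Module.finrank F E = 2)
    (g : Matrix.SpecialLinearGroup (Fin 2) F) (lam : E)
    (hlam : lam ∉ Set.range (algebraMap F E))
    (heig : Module.End.HasEigenvalue
      (Matrix.toLin' ((g : Matrix (Fin 2) (Fin 2) F).map (algebraMap F E))) lam) :
    lam⁻¹ = lam ^ (Fintype.card F) ∧
    orderOf lam ∣ Fintype.card F + 1 ∧
    (∀ x : Projectivization F (Fin 2 → F), SL2.projAction g x ≠ x) ∧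
    (∀ x : Projectivization F (Fin 2 → F),
      Function.minimalPeriod (SL2.projAction g) x =
        if Even (orderOf lam) then orderOf lam / 2 else orderOf lam) := by
  classical
  have hdet1 : (g : Matrix (Fin 2) (Fin 2) F).det = 1 := g.2
  -- the quadratic equation satisfied by lam
  obtain ⟨w, hw⟩ := heig.exists_hasEigenvector
  have hwM : ((g : Matrix (Fin 2) (Fin 2) F).map (algebraMap F E)).mulVec w = lam • w := by
    have h := hw.apply_eq_smul
    rwa [Matrix.toLin'_apply] at h
  have hq0 : lam ^ 2 - (algebraMap F E ((g : Matrix (Fin 2) (Fin 2) F) 0 0)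
      + algebraMap F E ((g : Matrix (Fin 2) (Fin 2) F) 1 1)) * lam + 1 = 0 :=
    SL2aux.quad_of_eigen F E _ hdet1 lam w hw.2 hwM
  have hlam0 : lam ≠ 0 := by intro h; rw [h] at hq0; simp at hq0
  have hlaminv : lam⁻¹ ∉ Set.range (algebraMap F E) := by
    rintro ⟨c, hc⟩
    refine hlam ⟨c⁻¹, ?_⟩
    rw [map_inv₀, hc, inv_inv]
  -- Frobenius
  set p := ringChar F with hp
  haveI hFact : Fact p.Prime := ⟨CharP.char_is_prime F p⟩
  obtain ⟨m, -, hcard⟩ := FiniteField.card F p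
  haveI : CharP E p := charP_of_injective_algebraMap (algebraMap F E).injective p
  haveI : ExpChar E p := ExpChar.prime hFact.out
  have hψ : ∀ x : E, iterateFrobenius E p (m : ℕ) x = x ^ (Fintype.card F) := by
    intro x
    rw [iterateFrobenius_def, ← hcard]
  have hfixF : ∀ c : F, (algebraMap F E c) ^ (Fintype.card F) = algebraMap F E c := by
    intro c
    rw [← map_pow, FiniteField.pow_card]
  have hrootq : (lam ^ (Fintype.card F)) ^ 2
      - (algebraMap F E ((g : Matrix (Fin 2) (Fin 2) F) 0 0)
        + algebraMap F E ((g : Matrix (Fin 2) (Fin 2) F) 1 1)) * lam ^ (Fintype.card F) + 1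
      = 0 := by
    have h := congrArg (iterateFrobenius E p (m : ℕ)) hq0
    simp only [map_sub, map_add, map_mul, map_pow, map_one, map_zero] at h
    simpa only [hψ, hfixF] using h
  have hfrob : lam ^ (Fintype.card F) = lam⁻¹ := by
    rcases SL2aux.classify E _ lam _ hq0 hrootq with h | h
    · exact absurd (SL2aux.mem_range_of_pow_card F E lam h) hlam
    · exact h
  have hpowq1 : lam ^ (Fintype.card F + 1) = 1 := by
    rw [pow_succ, hfrob, inv_mul_cancel₀ hlam0]
  have horder : orderOf lam ∣ Fintype.card F + 1 := orderOf_dvd_of_pow_eq_one hpowq1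
  have hopos : 0 < orderOf lam :=
    orderOf_pos_iff.mpr (isOfFinOrder_iff_pow_eq_one.mpr ⟨Fintype.card F + 1, Nat.succ_pos _, hpowq1⟩)
  -- no eigenvector over F
  have hnoeig : ∀ (μF : F) (v : Fin 2 → F), v ≠ 0 →
      (g : Matrix (Fin 2) (Fin 2) F).mulVec v ≠ μF • v := by
    intro μF v hv hMv
    have hu : (fun i => algebraMap F E (v i)) ≠ 0 := by
      intro h0
      apply hv
      funext i
      have h1 := congrFun h0 i
      exact (algebraMap F E).injective (by simpa using h1)
    have huM : ((g : Matrix (Fin 2) (Fin 2) F).map (algebraMap F E)).mulVec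
        (fun i => algebraMap F E (v i)) = (algebraMap F E μF) • (fun i => algebraMap F E (v i)) := by
      funext i
      simp only [Matrix.mulVec, dotProduct, Fin.sum_univ_two, Matrix.map_apply,
        Pi.smul_apply, smul_eq_mul, ← map_mul, ← map_add]
      have h1 := congrFun hMv i
      simp only [Matrix.mulVec, dotProduct, Fin.sum_univ_two, Pi.smul_apply,
        smul_eq_mul] at h1
      rw [h1]
    have hquadμ := SL2aux.quad_of_eigen F E _ hdet1 (algebraMap F E μF) _ hu huM
    rcases SL2aux.classify E _ lam _ hq0 hquadμ with h | h
    · exact hlam ⟨μF, h⟩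
    · exact hlaminv ⟨μF, h⟩
  -- the action on mk
  have hnz : ∀ (h : Matrix.SpecialLinearGroup (Fin 2) F) (v : Fin 2 → F), v ≠ 0 →
      (h : Matrix (Fin 2) (Fin 2) F).mulVec v ≠ 0 := by
    intro h v hv h0
    apply hv
    have h1 : Matrix.SpecialLinearGroup.toLin' h v = 0 := by
      rw [Matrix.SpecialLinearGroup.toLin'_apply, Matrix.toLin'_apply]
      exact h0
    exact (LinearEquiv.map_eq_zero_iff _).mp h1
  have hact : ∀ (h : Matrix.SpecialLinearGroup (Fin 2) F) (v : Fin 2 → F) (hv : v ≠ 0),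
      SL2.projAction h (Projectivization.mk F v hv) =
        Projectivization.mk F ((h : Matrix (Fin 2) (Fin 2) F).mulVec v) (hnz h v hv) := by
    intro h v hv
    unfold SL2.projAction
    rw [Projectivization.map_mk]
    have hvec : (Matrix.SpecialLinearGroup.toLin' h).toLinearMap v
        = (h : Matrix (Fin 2) (Fin 2) F).mulVec v := by
      rw [Matrix.SpecialLinearGroup.toLin'_to_linearMap, Matrix.toLin'_apply]
    simp only [hvec]
  have hiter : ∀ (n : ℕ) (v : Fin 2 → F) (hv : v ≠ 0),
      (SL2.projAction g)^[n] (Projectivization.mk F v hv) =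
        Projectivization.mk F (((g : Matrix (Fin 2) (Fin 2) F) ^ n).mulVec v)
          (by simpa [Matrix.SpecialLinearGroup.coe_pow] using hnz (g ^ n) v hv) := by
    intro n
    induction n with
    | zero => intro v hv; simp
    | succ n ih =>
      intro v hv
      rw [Function.iterate_succ_apply, hact g v hv, ih _ (hnz g v hv)]
      have : ((g : Matrix (Fin 2) (Fin 2) F) ^ n).mulVec
          ((g : Matrix (Fin 2) (Fin 2) F).mulVec v)
          = ((g : Matrix (Fin 2) (Fin 2) F) ^ (n + 1)).mulVec v := by
        rw [Matrix.mulVec_mulVec, ← pow_succ]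
      simp only [this]
  -- the key iff
  have hiff : ∀ (n : ℕ) (v : Fin 2 → F) (hv : v ≠ 0),
      (SL2.projAction g)^[n] (Projectivization.mk F v hv) = Projectivization.mk F v hv ↔
        orderOf lam ∣ 2 * n := by
    intro n v hv
    obtain ⟨α, β, hGn, hlamn, hlaminvn⟩ := SL2aux.pow_rep F E _ hdet1 lam hq0 n
    rw [hiter n v hv]
    constructor
    · intro h
      rw [Projectivization.mk_eq_mk_iff] at h
      obtain ⟨cu, hc⟩ := h
      rw [Units.smul_def, hGn, Matrix.add_mulVec, Matrix.smul_mulVec,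
        Matrix.smul_mulVec, Matrix.one_mulVec] at hc
      by_cases hα : α = 0
      · have hcβ : (cu : F) = β := by
          have h2 : ((cu : F) - β) • v = 0 := by
            rw [sub_smul, hc, hα, zero_smul, zero_add, sub_self]
          rcases smul_eq_zero.mp h2 with h3 | h3
          · exact sub_eq_zero.mp h3
          · exact absurd h3 hv
        have hmem : lam ^ n ∈ Set.range (algebraMap F E) := by
          rw [hlamn, hα, map_zero, zero_mul, zero_add]
          exact ⟨β, rfl⟩
        obtain ⟨e, he⟩ := hmem
        have h4 : (lam ^ n) ^ (Fintype.card F) = lam ^ n := by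
          rw [← he, hfixF]
        rw [← pow_mul, mul_comm, pow_mul, hfrob, inv_pow] at h4
        apply orderOf_dvd_of_pow_eq_one
        rw [two_mul, pow_add]
        nth_rewrite 1 [← h4]
        rw [inv_mul_cancel₀ (pow_ne_zero n hlam0)]
      · exfalso
        have h5 : (g : Matrix (Fin 2) (Fin 2) F).mulVec v = (α⁻¹ * ((cu : F) - β)) • v := by
          have h6 : α • ((g : Matrix (Fin 2) (Fin 2) F).mulVec v) = ((cu : F) - β) • v := by
            rw [sub_smul, hc]
            module
          rw [mul_smul, ← h6, smul_smul, inv_mul_cancel₀ hα, one_smul]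
        exact hnoeig _ v hv h5
    · intro hdvd
      have h2n : lam ^ (2 * n) = 1 := orderOf_dvd_iff_pow_eq_one.mp hdvd
      have hsq : (lam ^ n) * (lam ^ n) = 1 := by
        rw [← pow_add, ← two_mul]; exact h2n
      have hself : (lam ^ n)⁻¹ = lam ^ n := inv_eq_of_mul_eq_one_left hsq
      have heq2 : algebraMap F E α * lam + algebraMap F E β
          = algebraMap F E α * lam⁻¹ + algebraMap F E β := by
        rw [← hlamn, ← hlaminvn, inv_pow, hself]
      have hα : α = 0 := by
        have h3 : algebraMap F E α * (lam - lam⁻¹) = 0 := by linear_combination heq2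
        rcases mul_eq_zero.mp h3 with h4 | h4
        · exact (algebraMap F E).injective (by simpa using h4)
        · exfalso
          have h5 : lam = lam⁻¹ := sub_eq_zero.mp h4
          have h6 : lam * lam = 1 := by
            nth_rewrite 2 [h5]
            exact mul_inv_cancel₀ hlam0
          have h7 : (lam - 1) * (lam + 1) = 0 := by linear_combination h6
          rcases mul_eq_zero.mp h7 with h8 | h8
          · exact hlam ⟨1, by rw [map_one]; exact (sub_eq_zero.mp h8).symm⟩
          · refine hlam ⟨-1, ?_⟩
            rw [map_neg, map_one]
            have := eq_neg_of_add_eq_zero_left h8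
            rw [this]
      have hβ : β ≠ 0 := by
        intro h0
        apply pow_ne_zero n hlam0
        rw [hlamn, hα, h0]
        simp
      rw [Projectivization.mk_eq_mk_iff']
      refine ⟨β, ?_⟩
      rw [hGn, hα, zero_smul, zero_add, Matrix.smul_mulVec, Matrix.one_mulVec]
  -- no fixed points
  have hnofix : ∀ x : Projectivization F (Fin 2 → F), SL2.projAction g x ≠ x := by
    intro x
    induction x using Projectivization.ind with
    | h v hv =>
      intro hfix
      have h1 : (SL2.projAction g)^[1] (Projectivization.mk F v hv)
          = Projectivization.mk F v hv := by
        simpa using hfix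
      have h2 := (hiff 1 v hv).mp h1
      have h3 : lam ^ 2 = 1 := by
        have := orderOf_dvd_iff_pow_eq_one.mp h2
        simpa using this
      have h7 : (lam - 1) * (lam + 1) = 0 := by linear_combination h3
      rcases mul_eq_zero.mp h7 with h8 | h8
      · exact hlam ⟨1, by rw [map_one]; exact (sub_eq_zero.mp h8).symm⟩
      · refine hlam ⟨-1, ?_⟩
        rw [map_neg, map_one]
        exact (eq_neg_of_add_eq_zero_left h8).symm
  refine ⟨hfrob.symm, horder, hnofix, ?_⟩
  -- minimal periods
  intro x
  induction x using Projectivization.ind with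
  | h v hv =>
    have hper : ∀ n : ℕ, Function.IsPeriodicPt (SL2.projAction g) n (Projectivization.mk F v hv)
        ↔ orderOf lam ∣ 2 * n := fun n => hiff n v hv
    by_cases heven : Even (orderOf lam)
    · rw [if_pos heven]
      obtain ⟨k, hk⟩ := heven
      have hk2 : orderOf lam = 2 * k := by omega
      have hkpos : 0 < k := by omega
      have hdiv : orderOf lam / 2 = k := by omega
      rw [hdiv]
      have hperk : Function.IsPeriodicPt (SL2.projAction g) k (Projectivization.mk F v hv) :=
        (hper k).mpr (by rw [hk2])
      refine Nat.dvd_antisymm (hperk.minimalPeriod_dvd) ?_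
      have h2 := (hper _).mp (Function.isPeriodicPt_minimalPeriod (SL2.projAction g) _)
      rw [hk2] at h2
      exact (Nat.mul_dvd_mul_iff_left (by norm_num : 0 < 2)).mp h2
    · rw [if_neg heven]
      have hodd : ¬ (2 ∣ orderOf lam) := by
        intro h2
        exact heven ((even_iff_two_dvd).mpr h2)
      have hcop : Nat.Coprime (orderOf lam) 2 :=
        (Nat.coprime_comm.mp ((Nat.prime_two.coprime_iff_not_dvd).mpr hodd))
      have hpero : Function.IsPeriodicPt (SL2.projAction g) (orderOf lam)
          (Projectivization.mk F v hv) :=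
        (hper _).mpr (dvd_mul_left _ 2)
      refine Nat.dvd_antisymm (hpero.minimalPeriod_dvd) ?_
      have h2 := (hper _).mp (Function.isPeriodicPt_minimalPeriod (SL2.projAction g) _)
      exact hcop.dvd_of_dvd_mul_left h2
end

section
/- Let w = x^{a₁}y^{b₁}⋯x^{a_l}y^{b_l} with all a_i, b_i nonzero and let q be a power of a prime p with p ∤ a_i b_i for all i. Then for every t ∈ F_q there exists m ≤ l and unipotent matrices g, h ∈ SL₂(F_{q^m}) such that tr(w(g,h)) = t. -/
/-!
Take `g = u(x) = [[1, x], [0, 1]]` and `h = v(1) = [[1, 0], [1, 1]]`. Every factor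
`g ^ aᵢ * h ^ bᵢ = [[1 + aᵢbᵢx, aᵢx], [bᵢ, 1]]` is affine in `x`, so `tr w(g, h) = T(x)` for a
polynomial `T` of degree at most `l` whose `xˡ`-coefficient is the trace of the product of the
upper triangular matrices `[[aᵢbᵢ, aᵢ], [0, 0]]`, namely `∏ aᵢbᵢ`. This is nonzero when `p ∤ aᵢbᵢ`,
so `T - t` is a nonconstant polynomial of degree `l`; adjoining a root of one of its irreducible
factors gives an extension of degree at most `l` in which `tr w(g, h) = t`.
-/

/-- Evaluation of the word `w = x^{a₁}y^{b₁}⋯x^{a_l}y^{b_l}` at a pair of group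
elements. -/
def wordEval {G : Type*} [Group G] {l : ℕ} (a b : Fin l → ℤ) (g h : G) : G :=
  (List.ofFn fun i : Fin l => g ^ a i * h ^ b i).prod

open Matrix Polynomial
open scoped MatrixGroups

theorem MonoidHom.map_wordEval {G H : Type*} [Group G] [Group H] (φ : G →* H) {l : ℕ}
    (a b : Fin l → ℤ) (g h : G) : φ (wordEval a b g h) = wordEval a b (φ g) (φ h) := by
  simp only [wordEval, map_list_prod, List.map_ofFn, Function.comp_def, map_mul, map_zpow]

namespace Matrix

section Triangular

variable {m R : Type*} [Fintype m] [LinearOrder m] [Semiring R]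

theorem IsUpperTriangular.diag_mul {M N : Matrix m m R} (hM : M.IsUpperTriangular)
    (hN : N.IsUpperTriangular) : (M * N).diag = M.diag * N.diag := by
  ext i
  change ∑ k, M i k * N k i = M i i * N i i
  refine Finset.sum_eq_single i (fun k _ hki => ?_) (by simp)
  rcases hki.lt_or_gt with hk | hk
  · rw [hM hk, zero_mul]
  · rw [hN hk, mul_zero]

variable [DecidableEq m]

theorem IsUpperTriangular.list_prod {L : List (Matrix m m R)}
    (hL : ∀ M ∈ L, M.IsUpperTriangular) : L.prod.IsUpperTriangular := by
  induction L with
  | nil => exact blockTriangular_one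
  | cons M L ih =>
    simp only [List.forall_mem_cons] at hL
    exact hL.1.mul (ih hL.2)

theorem diag_list_prod_of_isUpperTriangular {L : List (Matrix m m R)}
    (hL : ∀ M ∈ L, M.IsUpperTriangular) : L.prod.diag = (L.map diag).prod := by
  induction L with
  | nil => simp
  | cons M L ih =>
    simp only [List.forall_mem_cons] at hL
    rw [List.prod_cons, hL.1.diag_mul (IsUpperTriangular.list_prod hL.2), ih hL.2,
      List.map_cons, List.prod_cons]

end Triangular

theorem trace_prod_ofFn_fin_two_of_row_one_eq_zero {R : Type*} [CommSemiring R] {l : ℕ}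
    (hl : l ≠ 0) (x y : Fin l → R) :
    (List.ofFn fun i => !![x i, y i; 0, 0]).prod.trace = ∏ i, x i := by
  have htri : ∀ M ∈ List.ofFn (fun i => !![x i, y i; 0, 0]), M.IsUpperTriangular := by
    simp only [List.mem_ofFn, forall_exists_index, forall_apply_eq_imp_iff]
    intro i j k hkj
    fin_cases j <;> fin_cases k <;> simp_all
  rw [trace, diag_list_prod_of_isUpperTriangular htri, Fin.sum_univ_two, List.map_ofFn]
  simp [Function.comp_def, List.prod_ofFn, hl]

section MatPoly

variable {n R : Type*} [Fintype n] [DecidableEq n] [CommSemiring R]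

theorem coeff_matPolyEquiv (M : Matrix n n R[X]) (k : ℕ) :
    (matPolyEquiv M).coeff k = M.map (coeff · k) := by
  ext i j
  exact matPolyEquiv_coeff_apply M k i j

theorem coeff_trace (M : Matrix n n R[X]) (k : ℕ) :
    M.trace.coeff k = ((matPolyEquiv M).coeff k).trace := by
  simp [trace, coeff_matPolyEquiv]

theorem natDegree_matPolyEquiv_le {M : Matrix n n R[X]} {d : ℕ}
    (hM : ∀ i j, (M i j).natDegree ≤ d) : (matPolyEquiv M).natDegree ≤ d := by
  refine natDegree_le_iff_coeff_eq_zero.2 fun k hk => ?_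
  ext i j
  rw [matPolyEquiv_coeff_apply]
  exact coeff_eq_zero_of_natDegree_lt ((hM i j).trans_lt hk)

theorem natDegree_trace_list_prod_le_and_coeff {L : List (Matrix n n R[X])}
    (hL : ∀ M ∈ L, ∀ i j, (M i j).natDegree ≤ 1) :
    L.prod.trace.natDegree ≤ L.length ∧
      L.prod.trace.coeff L.length =
        (L.map fun M : Matrix n n R[X] => M.map (coeff · 1)).prod.trace := by
  have hdeg : ∀ P ∈ L.map matPolyEquiv, P.natDegree ≤ 1 := by
    simp only [List.mem_map, forall_exists_index, and_imp, forall_apply_eq_imp_iff₂]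
    exact fun M hM => natDegree_matPolyEquiv_le (hL M hM)
  have hprod : matPolyEquiv L.prod = (L.map matPolyEquiv).prod := map_list_prod _ _
  constructor
  · refine natDegree_le_iff_coeff_eq_zero.2 fun k hk => ?_
    have hle : (L.map matPolyEquiv).prod.natDegree ≤ L.length := by
      refine (natDegree_list_prod_le _).trans ?_
      simpa using List.sum_le_card_nsmul (L.map matPolyEquiv |>.map natDegree) 1
        (by simpa using hdeg)
    rw [coeff_trace, hprod, coeff_eq_zero_of_natDegree_lt (hle.trans_lt hk), trace_zero]
  · have hcoeff := coeff_list_prod_of_natDegree_le _ 1 hdeg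
    rw [List.length_map, mul_one] at hcoeff
    rw [coeff_trace, hprod, hcoeff, List.map_map]
    simp only [Function.comp_def, coeff_matPolyEquiv]

end MatPoly

end Matrix

namespace Matrix.SpecialLinearGroup

variable {R S : Type*} [CommRing R] [CommRing S]

def upperRightHom : AddChar R SL(2, R) where
  toFun x := ⟨!![1, x; 0, 1], by simp⟩
  map_zero_eq_one' := by ext i j; fin_cases i <;> fin_cases j <;> rfl
  map_add_eq_mul' x y := Subtype.ext <| (mul_fin_two ..).trans (by simp [add_comm]) |>.symm

def lowerLeftHom : AddChar R SL(2, R) where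
  toFun x := ⟨!![1, 0; x, 1], by simp⟩
  map_zero_eq_one' := by ext i j; fin_cases i <;> fin_cases j <;> rfl
  map_add_eq_mul' x y := Subtype.ext <| (mul_fin_two ..).trans (by simp [add_comm]) |>.symm

@[simp] theorem coe_upperRightHom (x : R) :
    (upperRightHom x : Matrix (Fin 2) (Fin 2) R) = !![1, x; 0, 1] := rfl

@[simp] theorem coe_lowerLeftHom (x : R) :
    (lowerLeftHom x : Matrix (Fin 2) (Fin 2) R) = !![1, 0; x, 1] := rfl

theorem upperRightHom_sub_one_sq (x : R) :
    ((upperRightHom x : Matrix (Fin 2) (Fin 2) R) - 1) ^ 2 = 0 := by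
  rw [coe_upperRightHom, one_fin_two]
  ext i j; fin_cases i <;> fin_cases j <;> simp [sq]

theorem lowerLeftHom_sub_one_sq (x : R) :
    ((lowerLeftHom x : Matrix (Fin 2) (Fin 2) R) - 1) ^ 2 = 0 := by
  rw [coe_lowerLeftHom, one_fin_two]
  ext i j; fin_cases i <;> fin_cases j <;> simp [sq]

theorem map_upperRightHom (f : R →+* S) (x : R) :
    map f (upperRightHom x) = upperRightHom (f x) := by
  ext i j; fin_cases i <;> fin_cases j <;> simp

theorem map_lowerLeftHom (f : R →+* S) (x : R) :
    map f (lowerLeftHom x) = lowerLeftHom (f x) := by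
  ext i j; fin_cases i <;> fin_cases j <;> simp

theorem coe_upperRightHom_zpow_mul_lowerLeftHom_zpow (x y : R) (n k : ℤ) :
    ((upperRightHom x ^ n * lowerLeftHom y ^ k : SL(2, R)) : Matrix (Fin 2) (Fin 2) R) =
      !![1 + n * k * x * y, n * x; k * y, 1] := by
  rw [← AddChar.map_zsmul_eq_zpow, ← AddChar.map_zsmul_eq_zpow, coe_mul, coe_upperRightHom,
    coe_lowerLeftHom, mul_fin_two]
  simp only [zsmul_eq_mul]
  ext i j; fin_cases i <;> fin_cases j <;> simp; ring

end Matrix.SpecialLinearGroup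

open Matrix.SpecialLinearGroup

section WordTrace

variable {R : Type*} [CommRing R] {l : ℕ} (a b : Fin l → ℤ)

theorem coe_wordEval_upperRightHom_lowerLeftHom_one (x : R) :
    ((wordEval a b (upperRightHom x) (lowerLeftHom 1) : SL(2, R)) : Matrix (Fin 2) (Fin 2) R) =
      (List.ofFn fun i => !![1 + a i * b i * x, a i * x; b i, 1]).prod := by
  rw [wordEval, ← coeMonoidHom_apply, map_list_prod, List.map_ofFn]
  simp only [Function.comp_def, coeMonoidHom_apply, coe_upperRightHom_zpow_mul_lowerLeftHom_zpow,
    mul_one]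

noncomputable def wordTracePoly : R[X] :=
  ((wordEval a b (upperRightHom (X : R[X])) (lowerLeftHom 1) : SL(2, R[X])) :
    Matrix (Fin 2) (Fin 2) R[X]).trace

theorem aeval_wordTracePoly {A : Type*} [CommRing A] [Algebra R A] (x : A) :
    aeval x (wordTracePoly (R := R) a b) =
      ((wordEval a b (upperRightHom x) (lowerLeftHom 1) : SL(2, A)) :
        Matrix (Fin 2) (Fin 2) A).trace := by
  have hmap : map (aeval (R := R) x).toRingHom (wordEval a b (upperRightHom X) (lowerLeftHom 1)) =
      wordEval a b (upperRightHom x) (lowerLeftHom 1) := by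
    rw [MonoidHom.map_wordEval, map_upperRightHom, map_lowerLeftHom]
    simp
  rw [← hmap, map_apply_coe, wordTracePoly]
  exact AddMonoidHom.map_trace (aeval x) _

theorem natDegree_wordTracePoly (hl : l ≠ 0) (hab : ∏ i, (a i * b i : R) ≠ 0) :
    (wordTracePoly (R := R) a b).natDegree = l := by
  rw [wordTracePoly, coe_wordEval_upperRightHom_lowerLeftHom_one]
  set M : Fin l → Matrix (Fin 2) (Fin 2) R[X] :=
    fun i => !![1 + (a i : R[X]) * (b i : R[X]) * X, (a i : R[X]) * X; (b i : R[X]), 1] with hM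
  have haffine : ∀ N ∈ List.ofFn M, ∀ j k, (N j k).natDegree ≤ 1 := by
    simp only [List.mem_ofFn, forall_exists_index, forall_apply_eq_imp_iff, hM]
    intro i j k
    fin_cases j <;> fin_cases k <;> simp <;> compute_degree
  have hlead : (fun i => (M i).map (coeff · 1)) = fun i => !![(a i * b i : R), a i; 0, 0] := by
    funext i
    ext j k
    fin_cases j <;> fin_cases k <;> simp [hM, coeff_one, ← C_eq_intCast, coeff_C, -map_intCast]
  obtain ⟨hle, hcoeff⟩ := natDegree_trace_list_prod_le_and_coeff haffine
  rw [List.length_ofFn] at hle hcoeff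
  refine natDegree_eq_of_le_of_coeff_ne_zero hle ?_
  rwa [hcoeff, List.map_ofFn, Function.comp_def, hlead,
    trace_prod_ofFn_fin_two_of_row_one_eq_zero hl]

end WordTrace

universe u in
theorem exists_finrank_le_aeval_eq_zero {F : Type u} [Field F] {P : F[X]}
    (hP : 0 < P.natDegree) :
    ∃ (E : Type u) (_ : Field E) (_ : Algebra F E),
      Module.finrank F E ≤ P.natDegree ∧ ∃ x : E, aeval x P = 0 := by
  obtain ⟨f, hf, hfP⟩ := exists_irreducible_of_natDegree_pos hP
  have := Fact.mk hf
  refine ⟨AdjoinRoot f, inferInstance, inferInstance, ?_, AdjoinRoot.root f, ?_⟩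
  · rw [(AdjoinRoot.powerBasis hf.ne_zero).finrank, AdjoinRoot.powerBasis_dim]
    exact natDegree_le_of_dvd hfP (ne_zero_of_natDegree_gt hP)
  · rw [AdjoinRoot.aeval_eq, AdjoinRoot.mk_eq_zero]
    exact hfP

theorem trace_word_map_effectively_surjective_general
    (l : ℕ) (hl : 0 < l) (a b : Fin l → ℤ)
    (F : Type) [Field F] (p : ℕ) [CharP F p]
    (hpa : ∀ i, ¬ (p : ℤ) ∣ a i) (hpb : ∀ i, ¬ (p : ℤ) ∣ b i)
    (t : F) :
    ∃ (m : ℕ), m ≤ l ∧ ∃ (E : Type) (_ : Field E) (_ : Algebra F E),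
      Module.finrank F E = m ∧
      ∃ g h : Matrix.SpecialLinearGroup (Fin 2) E,
        ((g : Matrix (Fin 2) (Fin 2) E) - 1) ^ 2 = 0 ∧
        ((h : Matrix (Fin 2) (Fin 2) E) - 1) ^ 2 = 0 ∧
        ((wordEval a b g h : Matrix.SpecialLinearGroup (Fin 2) E) :
            Matrix (Fin 2) (Fin 2) E).trace = algebraMap F E t := by
  have hcast (n : ℤ) (hn : ¬ (p : ℤ) ∣ n) : (n : F) ≠ 0 :=
    mt (CharP.intCast_eq_zero_iff F p n).1 hn
  have hab : ∏ i, (a i * b i : F) ≠ 0 :=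
    Finset.prod_ne_zero_iff.2 fun i _ => mul_ne_zero (hcast _ (hpa i)) (hcast _ (hpb i))
  have hdeg : (wordTracePoly (R := F) a b - C t).natDegree = l := by
    rw [natDegree_sub_C, natDegree_wordTracePoly a b hl.ne' hab]
  obtain ⟨E, _, _, hE, x, hx⟩ := exists_finrank_le_aeval_eq_zero (hdeg ▸ hl)
  refine ⟨_, hdeg ▸ hE, E, _, _, rfl, upperRightHom x, lowerLeftHom 1,
    upperRightHom_sub_one_sq x, lowerLeftHom_sub_one_sq 1, ?_⟩
  rw [← aeval_wordTracePoly (R := F), ← sub_eq_zero, ← aeval_C, ← map_sub]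
  exact hx

/-- Let `w = x^{a₁}y^{b₁}⋯x^{a_l}y^{b_l}` with all `aᵢ, bᵢ` nonzero, and
let `F = F_q` have characteristic `p` with `p ∤ aᵢbᵢ`. Then for every `t ∈ F_q` there
is `m ≤ l` and unipotent `g, h ∈ SL₂(F_{q^m})` with `tr (w(g,h)) = t`. -/
theorem trace_word_map_effectively_surjective
    (l : ℕ) (hl : 0 < l) (a b : Fin l → ℤ) (ha : ∀ i, a i ≠ 0) (hb : ∀ i, b i ≠ 0)
    (F : Type) [Field F] [Fintype F] (p : ℕ) (hp : p.Prime) [CharP F p]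
    (hpa : ∀ i, ¬ (p : ℤ) ∣ a i) (hpb : ∀ i, ¬ (p : ℤ) ∣ b i)
    (t : F) :
    ∃ (m : ℕ), m ≤ l ∧ ∃ (E : Type) (_ : Field E) (_ : Algebra F E),
      Module.finrank F E = m ∧
      ∃ g h : Matrix.SpecialLinearGroup (Fin 2) E,
        ((g : Matrix (Fin 2) (Fin 2) E) - 1) ^ 2 = 0 ∧
        ((h : Matrix (Fin 2) (Fin 2) E) - 1) ^ 2 = 0 ∧
        ((wordEval a b g h : Matrix.SpecialLinearGroup (Fin 2) E) :
            Matrix (Fin 2) (Fin 2) E).trace = algebraMap F E t :=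
  trace_word_map_effectively_surjective_general l hl a b F p hpa hpb t
end

section
/- Let w = x^{a₁}y^{b₁}⋯x^{a_l}y^{b_l} with all a_i, b_i nonzero, let p be a prime with p ∤ a_i b_i for all i, and set g(U) = [[1,0],[U,1]] and h = [[1,1],[0,1]] over F_p[U]. Then r(U) := tr(w(g(U), h)) ∈ F_p[U] is a polynomial of degree exactly l in U with leading coefficient a₁b₁⋯a_lb_l mod p. -/
/-- The matrix `g(U) = [[1,0],[U,1]]` as an element of `SL₂(F_p[U])`. -/
noncomputable def lowerUnip (p : ℕ) : Matrix.SpecialLinearGroup (Fin 2) (Polynomial (ZMod p)) :=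
  ⟨!![1, 0; Polynomial.X, 1], by simp [Matrix.det_fin_two_of]⟩

/-- The matrix `h = [[1,1],[0,1]]` as an element of `SL₂(F_p[U])`. -/
noncomputable def upperUnip (p : ℕ) : Matrix.SpecialLinearGroup (Fin 2) (Polynomial (ZMod p)) :=
  ⟨!![1, 1; 0, 1], by simp [Matrix.det_fin_two_of]⟩

/-!
Powers of the unipotent matrices are `g(U)^a = [[1,0],[aU,1]]` and `h^b = [[1,b],[0,1]]`, so each
syllable `g^a h^b` is a matrix of polynomials of degree at most one with `U`-coefficient
`[[0,0],[a,ab]] = (0,1)ᵀ (a, ab)`. Viewing a matrix of polynomials as a polynomial with matrix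
coefficients, the product of `l` syllables has degree at most `l`, and its `U^l`-coefficient is
the product of these rank-one matrices, whose trace is `∏ aᵢbᵢ`; this is nonzero mod `p`.
-/

open Polynomial

theorem MonoidHom.map_zpow_eq_one_add_zsmul {G A : Type*} [Group G] [Ring A] (f : G →* A)
    {g : G} {N : A} (hN : N * N = 0) (hg : f g = 1 + N) (n : ℤ) :
    f (g ^ n) = 1 + n • N := by
  have hinv : f g⁻¹ = 1 - N := by
    calc f g⁻¹ = f g⁻¹ * ((1 + N) * (1 - N)) := by simp [mul_sub, add_mul, hN]
      _ = 1 - N := by rw [← mul_assoc, ← hg, ← map_mul, inv_mul_cancel, map_one, one_mul]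
  induction n using Int.induction_on with
  | zero => simp
  | succ k ih =>
    rw [zpow_add_one, map_mul, ih, hg]
    simp only [mul_add, add_mul, mul_one, one_mul, smul_mul_assoc, hN, smul_zero, add_smul,
      one_smul]
    abel
  | pred k ih =>
    rw [zpow_sub_one, map_mul, ih, hinv]
    simp only [mul_sub, add_mul, mul_one, one_mul, smul_mul_assoc, hN, smul_zero, sub_smul,
      one_smul]
    abel

lemma coe_lowerUnip_zpow (p : ℕ) (n : ℤ) :
    ((lowerUnip p ^ n : Matrix.SpecialLinearGroup (Fin 2) (ZMod p)[X]) :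
      Matrix (Fin 2) (Fin 2) (ZMod p)[X]) = !![1, 0; C (n : ZMod p) * X, 1] := by
  have hN : !![0, 0; (X : (ZMod p)[X]), 0] * !![0, 0; X, 0] = 0 := by
    ext i j : 1; fin_cases i <;> fin_cases j <;> simp
  have hg : (lowerUnip p : Matrix (Fin 2) (Fin 2) (ZMod p)[X]) = 1 + !![0, 0; X, 0] := by
    ext i j : 1; fin_cases i <;> fin_cases j <;> simp [lowerUnip]
  rw [← Matrix.SpecialLinearGroup.coeMonoidHom_apply,
    Matrix.SpecialLinearGroup.coeMonoidHom.map_zpow_eq_one_add_zsmul hN hg]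
  ext i j : 1; fin_cases i <;> fin_cases j <;> simp

lemma coe_upperUnip_zpow (p : ℕ) (n : ℤ) :
    ((upperUnip p ^ n : Matrix.SpecialLinearGroup (Fin 2) (ZMod p)[X]) :
      Matrix (Fin 2) (Fin 2) (ZMod p)[X]) = !![1, C (n : ZMod p); 0, 1] := by
  have hN : !![0, (1 : (ZMod p)[X]); 0, 0] * !![0, 1; 0, 0] = 0 := by
    ext i j : 1; fin_cases i <;> fin_cases j <;> simp
  have hg : (upperUnip p : Matrix (Fin 2) (Fin 2) (ZMod p)[X]) = 1 + !![0, 1; 0, 0] := by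
    ext i j : 1; fin_cases i <;> fin_cases j <;> simp [upperUnip]
  rw [← Matrix.SpecialLinearGroup.coeMonoidHom_apply,
    Matrix.SpecialLinearGroup.coeMonoidHom.map_zpow_eq_one_add_zsmul hN hg]
  ext i j : 1; fin_cases i <;> fin_cases j <;> simp

section StepMatrix

variable {R : Type*} [CommSemiring R]

lemma natDegree_matPolyEquiv_le {n : Type*} [Fintype n] [DecidableEq n]
    {M : Matrix n n R[X]} {k : ℕ} (h : ∀ i j, (M i j).natDegree ≤ k) :
    (matPolyEquiv M).natDegree ≤ k := by
  refine natDegree_le_iff_coeff_eq_zero.mpr fun N hN => ?_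
  ext i j
  rw [matPolyEquiv_coeff_apply]
  exact coeff_eq_zero_of_natDegree_lt ((h i j).trans_lt hN)

lemma coeff_trace_eq_trace_coeff_matPolyEquiv {n : Type*} [Fintype n] [DecidableEq n]
    (M : Matrix n n R[X]) (k : ℕ) :
    M.trace.coeff k = ((matPolyEquiv M).coeff k).trace := by
  simp [Matrix.trace]

/-- `[[1,0],[cU,1]] * [[1,d],[0,1]]`: the syllable `x^c y^d` evaluated at `(g(U), h)`. -/
noncomputable def stepMatrix (c d : R) : Matrix (Fin 2) (Fin 2) R[X] :=
  !![1, C d; C c * X, C (c * d) * X + 1]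

lemma natDegree_matPolyEquiv_stepMatrix_le (c d : R) :
    (matPolyEquiv (stepMatrix c d)).natDegree ≤ 1 := by
  refine natDegree_matPolyEquiv_le fun i j => ?_
  fin_cases i <;> fin_cases j <;> simp [stepMatrix] <;> compute_degree

lemma coeff_one_matPolyEquiv_stepMatrix (c d : R) :
    (matPolyEquiv (stepMatrix c d)).coeff 1 = !![0, 0; c, c * d] := by
  ext i j
  fin_cases i <;> fin_cases j <;> simp [stepMatrix, coeff_one]

lemma list_prod_ofFn_bottomRow {l : ℕ} (c d : Fin (l + 1) → R) :
    (List.ofFn fun i => !![0, 0; c i, c i * d i]).prod =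
      (∏ i : Fin l, c i.castSucc * d i.castSucc) •
        !![0, 0; c (Fin.last l), c (Fin.last l) * d (Fin.last l)] := by
  induction l with
  | zero => simp
  | succ l ih =>
    rw [List.ofFn_succ', List.prod_concat, ih (fun i => c i.castSucc) (fun i => d i.castSucc),
      Fin.prod_univ_castSucc]
    ext i j
    fin_cases i <;> fin_cases j <;> simp [Matrix.mul_apply, Fin.sum_univ_two]

lemma trace_list_prod_ofFn_bottomRow {l : ℕ} (hl : l ≠ 0) (c d : Fin l → R) :
    (List.ofFn fun i => !![0, 0; c i, c i * d i]).prod.trace = ∏ i, c i * d i := by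
  obtain ⟨l, rfl⟩ := Nat.exists_eq_succ_of_ne_zero hl
  rw [list_prod_ofFn_bottomRow, Fin.prod_univ_castSucc]
  simp [Matrix.trace_fin_two]

lemma matPolyEquiv_list_prod_stepMatrix {l : ℕ} (c d : Fin l → R) :
    matPolyEquiv (List.ofFn fun i => stepMatrix (c i) (d i)).prod =
      (List.ofFn fun i => matPolyEquiv (stepMatrix (c i) (d i))).prod := by
  rw [map_list_prod, List.map_ofFn]
  rfl

lemma natDegree_trace_list_prod_stepMatrix_le {l : ℕ} (c d : Fin l → R) :
    (List.ofFn fun i => stepMatrix (c i) (d i)).prod.trace.natDegree ≤ l := by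
  have hP : (matPolyEquiv (List.ofFn fun i => stepMatrix (c i) (d i)).prod).natDegree ≤ l := by
    rw [matPolyEquiv_list_prod_stepMatrix]
    refine (natDegree_list_prod_le _).trans ?_
    simpa [List.map_ofFn, List.sum_ofFn] using
      Finset.sum_le_card_nsmul Finset.univ _ 1 fun i _ =>
        natDegree_matPolyEquiv_stepMatrix_le (c i) (d i)
  refine natDegree_le_iff_coeff_eq_zero.mpr fun N hN => ?_
  rw [coeff_trace_eq_trace_coeff_matPolyEquiv, coeff_eq_zero_of_natDegree_lt (hP.trans_lt hN),
    Matrix.trace_zero]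

lemma coeff_trace_list_prod_stepMatrix {l : ℕ} (hl : l ≠ 0) (c d : Fin l → R) :
    (List.ofFn fun i => stepMatrix (c i) (d i)).prod.trace.coeff l = ∏ i, c i * d i := by
  have h := coeff_list_prod_of_natDegree_le
    (List.ofFn fun i => matPolyEquiv (stepMatrix (c i) (d i))) 1
    (by simpa using fun i => natDegree_matPolyEquiv_stepMatrix_le (c i) (d i))
  rw [List.length_ofFn, mul_one, List.map_ofFn] at h
  rw [coeff_trace_eq_trace_coeff_matPolyEquiv, matPolyEquiv_list_prod_stepMatrix, h,
    ← trace_list_prod_ofFn_bottomRow hl]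
  simp [Function.comp_def, coeff_one_matPolyEquiv_stepMatrix]

end StepMatrix

lemma coe_wordEval_lowerUnip_upperUnip (p : ℕ) {l : ℕ} (a b : Fin l → ℤ) :
    ((wordEval a b (lowerUnip p) (upperUnip p) :
        Matrix.SpecialLinearGroup (Fin 2) (ZMod p)[X]) : Matrix (Fin 2) (Fin 2) (ZMod p)[X]) =
      (List.ofFn fun i => stepMatrix (a i : ZMod p) (b i)).prod := by
  rw [wordEval, ← Matrix.SpecialLinearGroup.coeMonoidHom_apply, map_list_prod, List.map_ofFn]
  refine congrArg List.prod (congrArg List.ofFn (funext fun i => ?_))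
  rw [Function.comp_apply, Matrix.SpecialLinearGroup.coeMonoidHom_apply,
    Matrix.SpecialLinearGroup.coe_mul, coe_lowerUnip_zpow, coe_upperUnip_zpow]
  ext j k : 1
  fin_cases j <;> fin_cases k <;> simp [stepMatrix, Matrix.mul_apply, Fin.sum_univ_two]
  ring

theorem trace_word_polynomial_degree_general
    (l : ℕ) (hl : 0 < l) (a b : Fin l → ℤ)
    (p : ℕ) (hp : p.Prime)
    (hpa : ∀ i, ¬ (p : ℤ) ∣ a i) (hpb : ∀ i, ¬ (p : ℤ) ∣ b i) :
    (((wordEval a b (lowerUnip p) (upperUnip p) :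
          Matrix.SpecialLinearGroup (Fin 2) (Polynomial (ZMod p))) :
        Matrix (Fin 2) (Fin 2) (Polynomial (ZMod p))).trace).degree = l ∧
    (((wordEval a b (lowerUnip p) (upperUnip p) :
          Matrix.SpecialLinearGroup (Fin 2) (Polynomial (ZMod p))) :
        Matrix (Fin 2) (Fin 2) (Polynomial (ZMod p))).trace).leadingCoeff =
      ((∏ i : Fin l, a i * b i : ℤ) : ZMod p) := by
  have : Fact p.Prime := ⟨hp⟩
  have hcast_ne_zero {n : ℤ} (hn : ¬ (p : ℤ) ∣ n) : (n : ZMod p) ≠ 0 :=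
    mt (ZMod.intCast_zmod_eq_zero_iff_dvd n p).mp hn
  have hprod : ∏ i, (a i : ZMod p) * b i ≠ 0 := Finset.prod_ne_zero_iff.mpr fun i _ =>
    mul_ne_zero (hcast_ne_zero (hpa i)) (hcast_ne_zero (hpb i))
  rw [coe_wordEval_lowerUnip_upperUnip]
  push_cast
  set r := (List.ofFn fun i => stepMatrix (a i : ZMod p) (b i)).prod.trace
  have hle : r.natDegree ≤ l := natDegree_trace_list_prod_stepMatrix_le _ _
  have hcoeff : r.coeff l = ∏ i, (a i : ZMod p) * b i :=
    coeff_trace_list_prod_stepMatrix hl.ne' _ _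
  have hne : r.coeff l ≠ 0 := hcoeff ▸ hprod
  refine ⟨degree_eq_of_le_of_coeff_ne_zero (natDegree_le_iff_degree_le.mp hle) hne, ?_⟩
  rw [leadingCoeff, natDegree_eq_of_le_of_coeff_ne_zero hle hne, hcoeff]

/-- For `w = x^{a₁}y^{b₁}⋯x^{a_l}y^{b_l}` with nonzero exponents not
divisible by the prime `p`, the trace `r(U) = tr w(g(U), h)` with
`g(U) = [[1,0],[U,1]]`, `h = [[1,1],[0,1]]` over `F_p[U]` is a polynomial of degree
exactly `l` with leading coefficient `a₁b₁⋯a_lb_l mod p`. -/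
theorem trace_word_polynomial_degree
    (l : ℕ) (hl : 0 < l) (a b : Fin l → ℤ) (ha : ∀ i, a i ≠ 0) (hb : ∀ i, b i ≠ 0)
    (p : ℕ) (hp : p.Prime)
    (hpa : ∀ i, ¬ (p : ℤ) ∣ a i) (hpb : ∀ i, ¬ (p : ℤ) ∣ b i) :
    (((wordEval a b (lowerUnip p) (upperUnip p) :
          Matrix.SpecialLinearGroup (Fin 2) (Polynomial (ZMod p))) :
        Matrix (Fin 2) (Fin 2) (Polynomial (ZMod p))).trace).degree = l ∧
    (((wordEval a b (lowerUnip p) (upperUnip p) :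
          Matrix.SpecialLinearGroup (Fin 2) (Polynomial (ZMod p))) :
        Matrix (Fin 2) (Fin 2) (Polynomial (ZMod p))).trace).leadingCoeff =
      ((∏ i : Fin l, a i * b i : ℤ) : ZMod p) :=
  trace_word_polynomial_degree_general l hl a b p hp hpa hpb
end

section
/- Let k be a field, c a positive integer, and χ ∈ k[X] a polynomial. Then the c-th power of the Frobenius (companion) block F(χ(X^c)) is conjugate in GL over k to a block diagonal sum of c copies of F(χ): F(χ(X^c))^c ≅ F(χ)^{⊕c}. -/
/-- The companion (Frobenius) matrix of a polynomial `χ`, of size `n` (intended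
`n = deg χ`): 1's on the subdiagonal, last column given by minus the coefficients
of `χ`. It is the matrix of multiplication by `X` on `k[X]/(χ)`. -/
def companionMatrix {k : Type} [Field k] (n : ℕ) (χ : Polynomial k) :
    Matrix (Fin n) (Fin n) k :=
  Matrix.of fun i j =>
    if (j : ℕ) + 1 = n then -χ.coeff i
    else if (i : ℕ) = (j : ℕ) + 1 then 1 else 0


/-! In the basis `X ^ (j + c * i)` of `k[X]/(χ(X^c))`, indexed by `(i, j) : Fin n × Fin c`
through `finProdFinEquiv`, multiplication by `X ^ c` maps each block `X ^ j * k[X^c]` to itself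
and acts there as multiplication by `X` does on `k[X]/(χ)`: it shifts `i` by one, and sends
the last basis vector `X ^ (j + c * (n - 1))` of the block to `-∑ m < n, χₘ X ^ (j + c * m)`.
So the two matrices are literally equal and `P = 1`. -/

open Polynomial Matrix

section companionMatrix

variable {k : Type} [Field k] {n : ℕ} (χ : k[X])

lemma companionMatrix_mulVec_single_of_lt (j : Fin n) (hj : j + 1 < n) (x : k) :
    companionMatrix n χ *ᵥ Pi.single j x = Pi.single ⟨j + 1, hj⟩ x := by
  ext i
  simp [companionMatrix, Pi.single_apply, Fin.ext_iff, hj.ne]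

lemma companionMatrix_mulVec_single_of_succ_eq (j : Fin n) (hj : j + 1 = n) :
    companionMatrix n χ *ᵥ Pi.single j 1 = fun i : Fin n => -χ.coeff i := by
  ext i
  simp [companionMatrix, hj]

lemma companionMatrix_pow_mulVec_single (t : ℕ) (j : Fin n) (hj : j + t < n) (x : k) :
    companionMatrix n χ ^ t *ᵥ Pi.single j x = Pi.single ⟨j + t, hj⟩ x := by
  induction t generalizing j with
  | zero => rw [pow_zero, one_mulVec]; rfl
  | succ t ih =>
    rw [pow_succ, ← mulVec_mulVec, companionMatrix_mulVec_single_of_lt χ j (by omega),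
      ih _ (by simp only; omega)]
    simp only [add_assoc, add_comm 1]

end companionMatrix

section blockInclusion

variable {R : Type*} [Semiring R] {n c : ℕ}

/-- The block `X ^ j * k[X^c]` of the header, on the coordinates `finProdFinEquiv (i, j)`. -/
def blockInclusion (j : Fin c) : (Fin n → R) →ₗ[R] (Fin (n * c) → R) where
  toFun v p := if (finProdFinEquiv.symm p).2 = j then v (finProdFinEquiv.symm p).1 else 0
  map_add' v w := by ext p; simp only [Pi.add_apply]; split_ifs <;> simp
  map_smul' a v := by ext p; simp only [Pi.smul_apply, RingHom.id_apply]; split_ifs <;> simp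

lemma blockInclusion_apply (j : Fin c) (v : Fin n → R) (i : Fin n) (j' : Fin c) :
    blockInclusion j v (finProdFinEquiv (i, j')) = if j' = j then v i else 0 := by
  simp only [blockInclusion, LinearMap.coe_mk, AddHom.coe_mk, Equiv.symm_apply_apply]

lemma blockInclusion_single (i : Fin n) (j : Fin c) (x : R) :
    blockInclusion j (Pi.single i x) = Pi.single (finProdFinEquiv (i, j)) x := by
  ext p
  obtain ⟨⟨i', j'⟩, rfl⟩ := finProdFinEquiv.surjective p
  by_cases hj : j' = j <;> by_cases hi : i' = i <;> simp [blockInclusion_apply, *]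

lemma reindex_blockDiagonal_mulVec_single (M : Matrix (Fin n) (Fin n) R) (i : Fin n) (j : Fin c) :
    reindex finProdFinEquiv finProdFinEquiv (blockDiagonal fun _ : Fin c => M) *ᵥ
        Pi.single (finProdFinEquiv (i, j)) 1 =
      blockInclusion j (M *ᵥ Pi.single i 1) := by
  ext p
  obtain ⟨⟨i', j'⟩, rfl⟩ := finProdFinEquiv.surjective p
  simp [blockInclusion_apply, blockDiagonal_apply, eq_comm]

lemma neg_coeff_comp_X_pow_eq_blockInclusion {R : Type*} [CommRing R] (χ : R[X]) (hc : 0 < c) :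
    (fun p : Fin (n * c) => -(χ.comp (X ^ c)).coeff p) =
      blockInclusion ⟨0, hc⟩ (fun i : Fin n => -χ.coeff i) := by
  ext p
  obtain ⟨⟨i, j⟩, rfl⟩ := finProdFinEquiv.surjective p
  rw [blockInclusion_apply, finProdFinEquiv_apply_val, ← expand_eq_comp_X_pow, coeff_expand hc]
  by_cases hj : (j : ℕ) = 0
  · have hj' : j = ⟨0, hc⟩ := Fin.ext hj
    simp [hj', Nat.mul_div_cancel_left _ hc]
  · have hdvd : ¬ c ∣ j + c * i := by
      rw [Nat.dvd_add_left (dvd_mul_right c i)]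
      exact Nat.not_dvd_of_pos_of_lt (Nat.pos_of_ne_zero hj) j.isLt
    simp [hdvd, Fin.ext_iff, hj]

end blockInclusion

section companionMatrix_comp_X_pow

variable {k : Type} [Field k] {n c : ℕ}

lemma companionMatrix_pow_mulVec_blockInclusion (ψ : k[X]) (t : ℕ) (j : Fin c) (h : j + t < c)
    (v : Fin n → k) :
    companionMatrix (n * c) ψ ^ t *ᵥ blockInclusion j v = blockInclusion ⟨j + t, h⟩ v := by
  have key : (companionMatrix (n * c) ψ ^ t).mulVecLin ∘ₗ blockInclusion j =
      blockInclusion ⟨j + t, h⟩ := by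
    refine LinearMap.pi_ext fun i x => ?_
    have hi : (finProdFinEquiv (i, j) : ℕ) + t < n * c := by
      simp only [finProdFinEquiv_apply_val]
      nlinarith [i.isLt]
    simp only [LinearMap.comp_apply, mulVecLin_apply, blockInclusion_single,
      companionMatrix_pow_mulVec_single ψ t _ hi]
    congr 1
    ext
    simp only [finProdFinEquiv_apply_val]
    ring
  exact LinearMap.congr_fun key v

lemma companionMatrix_comp_X_pow_pow_mulVec_single (χ : k[X]) (i : Fin n) (j : Fin c) :
    companionMatrix (n * c) (χ.comp (X ^ c)) ^ c *ᵥ Pi.single (finProdFinEquiv (i, j)) 1 =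
      blockInclusion j (companionMatrix n χ *ᵥ Pi.single i 1) := by
  set F := companionMatrix (n * c) (χ.comp (X ^ c))
  by_cases hi : (i : ℕ) + 1 < n
  · have hlt : (finProdFinEquiv (i, j) : ℕ) + c < n * c := by
      simp only [finProdFinEquiv_apply_val]
      nlinarith [j.isLt]
    rw [companionMatrix_pow_mulVec_single _ c _ hlt, companionMatrix_mulVec_single_of_lt χ i hi,
      blockInclusion_single]
    congr 1
    ext
    simp only [finProdFinEquiv_apply_val]
    ring
  · have hi : (i : ℕ) + 1 = n := by omega
    have hc : 0 < c := j.pos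
    -- `X ^ c` is `X ^ j * X * X ^ (c - (j + 1))`, and the last factor moves our basis vector
    -- to the last one, `X ^ (n * c - 1)`.
    have hsplit : F ^ c = F ^ (j : ℕ) * F * F ^ (c - (j + 1)) := by
      rw [← pow_succ, ← pow_add]
      congr 1
      omega
    have hlast :
        (finProdFinEquiv (i, (⟨j + (c - (j + 1)), by omega⟩ : Fin c)) : ℕ) + 1 = n * c := by
      have : c * i + c = n * c := by rw [← Nat.mul_succ, Nat.succ_eq_add_one, hi, mul_comm]
      simp only [finProdFinEquiv_apply_val]
      omega
    have hzero : (⟨0 + j, by simp⟩ : Fin c) = j := Fin.ext (zero_add _)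
    rw [hsplit, ← mulVec_mulVec, ← mulVec_mulVec, ← blockInclusion_single,
      companionMatrix_pow_mulVec_blockInclusion _ _ j (by omega), blockInclusion_single,
      companionMatrix_mulVec_single_of_succ_eq _ _ hlast,
      neg_coeff_comp_X_pow_eq_blockInclusion χ hc,
      companionMatrix_pow_mulVec_blockInclusion _ _ _ (by simp), hzero,
      companionMatrix_mulVec_single_of_succ_eq χ i hi]

theorem companionMatrix_comp_X_pow_pow (χ : k[X]) (n c : ℕ) :
    companionMatrix (n * c) (χ.comp (X ^ c)) ^ c =
      reindex finProdFinEquiv finProdFinEquiv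
        (blockDiagonal fun _ : Fin c => companionMatrix n χ) := by
  refine ext_of_mulVec_single fun q => ?_
  obtain ⟨⟨i, j⟩, rfl⟩ := finProdFinEquiv.surjective q
  rw [companionMatrix_comp_X_pow_pow_mulVec_single, reindex_blockDiagonal_mulVec_single]

end companionMatrix_comp_X_pow

theorem companion_pow_similar_blockDiagonal_general
    (k : Type) [Field k] (χ : Polynomial k)
    (c : ℕ) :
    ∃ P : (Matrix (Fin (χ.natDegree * c)) (Fin (χ.natDegree * c)) k)ˣ,
      (P : Matrix (Fin (χ.natDegree * c)) (Fin (χ.natDegree * c)) k) *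
          (companionMatrix (χ.natDegree * c) (χ.comp (Polynomial.X ^ c))) ^ c *
          (↑P⁻¹ : Matrix (Fin (χ.natDegree * c)) (Fin (χ.natDegree * c)) k) =
        Matrix.reindex finProdFinEquiv finProdFinEquiv
          (Matrix.blockDiagonal fun _ : Fin c => companionMatrix χ.natDegree χ) :=
  ⟨1, by simpa using companionMatrix_comp_X_pow_pow χ χ.natDegree c⟩

/-- For a monic polynomial `χ ∈ k[X]` of degree `d` and `c ≥ 1`,
the `c`-th power of the companion block `F(χ(X^c))` is conjugate over `k` to the
block diagonal sum of `c` copies of `F(χ)`. -/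
theorem companion_pow_similar_blockDiagonal
    (k : Type) [Field k] (χ : Polynomial k) (hχ : χ.Monic) (hd : 0 < χ.natDegree)
    (c : ℕ) (hc : 0 < c) :
    ∃ P : (Matrix (Fin (χ.natDegree * c)) (Fin (χ.natDegree * c)) k)ˣ,
      (P : Matrix (Fin (χ.natDegree * c)) (Fin (χ.natDegree * c)) k) *
          (companionMatrix (χ.natDegree * c) (χ.comp (Polynomial.X ^ c))) ^ c *
          (↑P⁻¹ : Matrix (Fin (χ.natDegree * c)) (Fin (χ.natDegree * c)) k) =
        Matrix.reindex finProdFinEquiv finProdFinEquiv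
          (Matrix.blockDiagonal fun _ : Fin c => companionMatrix χ.natDegree χ) :=
  companion_pow_similar_blockDiagonal_general k χ c
end

section
/- Let G be a group generated by two elements g, h, written as 𝐅₂/N, and let w ∈ N. Consider the ℤ-linear map D: ℤ[G] ⊕ ℤ[G] → ℤ[G] sending (g⊗1, 0) ↦ π(∂w/∂x)* and (0, h⊗1) ↦ π(∂w/∂y)*, where π: ℤ[𝐅₂] → ℤ[G] is induced by the quotient and * is the involution of the group ring. Then D is the zero map if and only if w ∈ [N, N]. -/
/-!
Write `π : ℤ[F] → ℤ[F/N]` for the projection. For `m ∈ N` we have `π m = 1`, so by the product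
rule `π ∘ D` restricted to `N` is a homomorphism into an abelian group for every Fox derivation
`D`; hence it kills `[N, N]`.

Conversely, choose a transversal `t` of `N` and let `ρ : ℤ[F] → N^ab` be the `ℤ`-linear
extension of `f ↦ [f t(f)⁻¹]`. The cocycle identity of `f ↦ f t(f)⁻¹` shows that
`ρ (z (v - 1))` only depends on `π z`. Applying `ρ` to the fundamental formula
`w - 1 = ∂w/∂x (x - 1) + ∂w/∂y (y - 1)` gives `[w] = ρ (w - 1) = 0` in `N^ab` as soon as
`π (∂w/∂x) = π (∂w/∂y) = 0`, i.e. `w ∈ [N, N]`. The involution `*` is a bijection, so it does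
not affect vanishing.
-/

open MonoidAlgebra

namespace FoxCalculus

variable {R G : Type*} [Ring R] [Group G]

def IsFoxDerivation (D : G → MonoidAlgebra R G) : Prop :=
  ∀ u v, D (u * v) = D u + of R G u * D v

namespace IsFoxDerivation

variable {D E : G → MonoidAlgebra R G}

lemma map_one (hD : IsFoxDerivation D) : D 1 = 0 := by
  have h := hD 1 1
  rwa [mul_one, _root_.map_one, one_mul, left_eq_add] at h

lemma map_inv (hD : IsFoxDerivation D) (u : G) : D u⁻¹ = -(of R G u⁻¹ * D u) := by
  have h := hD u⁻¹ u
  rw [inv_mul_cancel, hD.map_one] at h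
  exact eq_neg_of_add_eq_zero_left h.symm

lemma sub (hD : IsFoxDerivation D) (hE : IsFoxDerivation E) :
    IsFoxDerivation fun u ↦ D u - E u := by
  intro u v
  simp only [hD u v, hE u v]
  noncomm_ring

lemma mul_right (hD : IsFoxDerivation D) (a : MonoidAlgebra R G) :
    IsFoxDerivation fun u ↦ D u * a := by
  intro u v
  simp only [hD u v, add_mul, mul_assoc]

lemma sum {ι : Type*} (s : Finset ι) {D : ι → G → MonoidAlgebra R G}
    (hD : ∀ i ∈ s, IsFoxDerivation (D i)) : IsFoxDerivation fun u ↦ ∑ i ∈ s, D i u := by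
  intro u v
  rw [Finset.mul_sum, ← Finset.sum_add_distrib]
  exact Finset.sum_congr rfl fun i hi ↦ hD i hi u v

lemma map_eq_zero_of_generators {α : Type*} {D : FreeGroup α → MonoidAlgebra R (FreeGroup α)}
    (hD : IsFoxDerivation D) (h : ∀ a, D (FreeGroup.of a) = 0) (u : FreeGroup α) : D u = 0 := by
  induction u using FreeGroup.induction_on with
  | C1 => exact hD.map_one
  | of a => exact h a
  | inv_of a ih => rw [hD.map_inv, ih, mul_zero, neg_zero]
  | mul u v hu hv => rw [hD, hu, hv, mul_zero, add_zero]

lemma ext_of_generators {α : Type*} {D E : FreeGroup α → MonoidAlgebra R (FreeGroup α)}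
    (hD : IsFoxDerivation D) (hE : IsFoxDerivation E)
    (h : ∀ a, D (FreeGroup.of a) = E (FreeGroup.of a)) : D = E := by
  funext u
  exact sub_eq_zero.mp <| (hD.sub hE).map_eq_zero_of_generators (fun a ↦ sub_eq_zero.mpr (h a)) u

end IsFoxDerivation

lemma isFoxDerivation_of_sub_one : IsFoxDerivation fun u ↦ of R G u - 1 := by
  intro u v
  simp only [map_mul]
  noncomm_ring

theorem fox_fundamental_formula {α : Type*} [Fintype α] [DecidableEq α]
    {D : α → FreeGroup α → MonoidAlgebra R (FreeGroup α)} (hD : ∀ i, IsFoxDerivation (D i))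
    (hgen : ∀ i j, D i (FreeGroup.of j) = if i = j then 1 else 0) (u : FreeGroup α) :
    of R _ u - 1 = ∑ i, D i u * (of R _ (FreeGroup.of i) - 1) := by
  -- both sides are Fox derivations in `u` taking the same values on the generators
  refine congrFun (isFoxDerivation_of_sub_one.ext_of_generators
    (IsFoxDerivation.sum _ fun i _ ↦ (hD i).mul_right _) fun j ↦ ?_) u
  simp [hgen]

section Commutator

variable (N : Subgroup G) [N.Normal] {D : G → MonoidAlgebra R G}

lemma mapDomain_mk'_of_of_mem {m : G} (hm : m ∈ N) :
    mapDomainRingHom R (QuotientGroup.mk' N) (of R G m) = 1 := by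
  rw [mapDomainRingHom_apply, of_apply, mapDomain_single, QuotientGroup.mk'_apply,
    (QuotientGroup.eq_one_iff m).mpr hm, one_def]

noncomputable def IsFoxDerivation.restrictHom (hD : IsFoxDerivation D) :
    N →* Multiplicative (MonoidAlgebra R (G ⧸ N)) :=
  MonoidHom.mk' (fun m ↦ .ofAdd (mapDomainRingHom R (QuotientGroup.mk' N) (D m))) fun m n ↦ by
    simp only [Subgroup.coe_mul, hD m n, map_add, map_mul, mapDomain_mk'_of_of_mem N m.2, one_mul,
      ofAdd_add]

lemma IsFoxDerivation.mapDomain_mk'_eq_zero_of_mem_commutator (hD : IsFoxDerivation D) {w : G}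
    (hw : w ∈ ⁅N, N⁆) : mapDomainRingHom R (QuotientGroup.mk' N) (D w) = 0 := by
  rw [← N.map_subtype_commutator] at hw
  obtain ⟨n, hn, rfl⟩ := hw
  exact ofAdd_eq_one.mp (Abelianization.commutator_subset_ker (hD.restrictHom N) hn)

end Commutator

section Transversal

variable {F : Type*} [Group F] (N : Subgroup F) [N.Normal]

lemma mul_inv_out_mk_mem (f : F) : f * (QuotientGroup.mk f : F ⧸ N).out⁻¹ ∈ N := by
  rw [← QuotientGroup.eq_one_iff, QuotientGroup.mk_mul, QuotientGroup.mk_inv,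
    QuotientGroup.out_eq', mul_inv_cancel]

/-- With the transversal `t = Quotient.out ∘ mk`, every `f` factors as `cosetDefect N f * t f`. -/
noncomputable def cosetDefect (f : F) : N :=
  ⟨f * (QuotientGroup.mk f : F ⧸ N).out⁻¹, mul_inv_out_mk_mem N f⟩

lemma cosetDefect_out (q : F ⧸ N) : cosetDefect N q.out = 1 :=
  Subtype.ext <| by simp [cosetDefect]

lemma cosetDefect_mul (f v : F) :
    cosetDefect N (f * v) =
      cosetDefect N f * cosetDefect N ((QuotientGroup.mk f : F ⧸ N).out * v) := by
  have hmk : (QuotientGroup.mk ((QuotientGroup.mk f : F ⧸ N).out * v) : F ⧸ N) =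
      QuotientGroup.mk (f * v) := by
    rw [QuotientGroup.mk_mul, QuotientGroup.out_eq', QuotientGroup.mk_mul]
  apply Subtype.ext
  simp only [cosetDefect, Subgroup.coe_mul, hmk]
  group

lemma cosetDefect_mem_mul {m : F} (hm : m ∈ N) (f : F) :
    cosetDefect N (m * f) = ⟨m, hm⟩ * cosetDefect N f := by
  have hmk : (QuotientGroup.mk (m * f) : F ⧸ N) = f := by
    rw [QuotientGroup.mk_mul, (QuotientGroup.eq_one_iff m).mpr hm, one_mul]
  apply Subtype.ext
  simp only [cosetDefect, Subgroup.coe_mul, hmk, mul_assoc]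

noncomputable def linearCosetDefect : MonoidAlgebra ℤ F →ₗ[ℤ] Additive (Abelianization N) :=
  Finsupp.linearCombination ℤ (fun f ↦ .ofMul (Abelianization.of (cosetDefect N f))) ∘ₗ
    (coeffLinearEquiv ℤ).toLinearMap

lemma linearCosetDefect_of (f : F) :
    linearCosetDefect N (of ℤ F f) = .ofMul (Abelianization.of (cosetDefect N f)) := by
  simp [linearCosetDefect]

lemma linearCosetDefect_of_mul_sub_one (f v : F) :
    linearCosetDefect N (of ℤ F f * (of ℤ F v - 1)) =
      linearCosetDefect N (of ℤ F (QuotientGroup.mk f : F ⧸ N).out * (of ℤ F v - 1)) := by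
  rw [mul_sub, mul_sub, mul_one, mul_one, ← map_mul, ← map_mul, map_sub, map_sub,
    linearCosetDefect_of, linearCosetDefect_of, linearCosetDefect_of, linearCosetDefect_of,
    cosetDefect_mul N f v, cosetDefect_out, map_one, map_mul, ofMul_mul, ofMul_one]
  abel

lemma linearCosetDefect_mul_sub_one (z : MonoidAlgebra ℤ F) (v : F) :
    linearCosetDefect N (z * (of ℤ F v - 1)) =
      (mapDomainRingHom ℤ (QuotientGroup.mk' N) z).coeff.sum fun q c ↦
        c • linearCosetDefect N (of ℤ F q.out * (of ℤ F v - 1)) := by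
  induction z using MonoidAlgebra.induction_linear with
  | zero => simp
  | add a b ha hb => rw [add_mul, map_add, map_add, coeff_add, ha, hb, Finsupp.sum_add_index'] <;>
      simp [add_smul]
  | single f c =>
    rw [← smul_of, smul_mul_assoc, map_zsmul, linearCosetDefect_of_mul_sub_one]
    simp

lemma linearCosetDefect_mul_sub_one_eq_zero {z : MonoidAlgebra ℤ F}
    (hz : mapDomainRingHom ℤ (QuotientGroup.mk' N) z = 0) (v : F) :
    linearCosetDefect N (z * (of ℤ F v - 1)) = 0 := by
  rw [linearCosetDefect_mul_sub_one, hz, coeff_zero, Finsupp.sum_zero_index]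

lemma linearCosetDefect_of_sub_one_of_mem {w : F} (hw : w ∈ N) :
    linearCosetDefect N (of ℤ F w - 1) = .ofMul (Abelianization.of ⟨w, hw⟩) := by
  have hdefect : cosetDefect N w = ⟨w, hw⟩ * cosetDefect N 1 := by
    simpa only [mul_one] using cosetDefect_mem_mul N hw 1
  rw [← (of ℤ F).map_one, map_sub, linearCosetDefect_of, linearCosetDefect_of, hdefect,
    map_mul, ofMul_mul, add_sub_cancel_right]

end Transversal

theorem mem_commutator_of_mapDomain_mk'_fox_eq_zero {α : Type*} [Fintype α] [DecidableEq α]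
    (N : Subgroup (FreeGroup α)) [N.Normal]
    {D : α → FreeGroup α → MonoidAlgebra ℤ (FreeGroup α)} (hD : ∀ i, IsFoxDerivation (D i))
    (hgen : ∀ i j, D i (FreeGroup.of j) = if i = j then 1 else 0) {w : FreeGroup α} (hw : w ∈ N)
    (h : ∀ i, mapDomainRingHom ℤ (QuotientGroup.mk' N) (D i w) = 0) : w ∈ ⁅N, N⁆ := by
  have habel : Abelianization.of (⟨w, hw⟩ : N) = 1 := by
    have hsum := linearCosetDefect_of_sub_one_of_mem N hw
    rw [fox_fundamental_formula hD hgen, map_sum,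
      Finset.sum_eq_zero fun i _ ↦ linearCosetDefect_mul_sub_one_eq_zero N (h i) _] at hsum
    exact ofMul_eq_zero.mp hsum.symm
  rw [← N.map_subtype_commutator, ← Abelianization.ker_of]
  exact ⟨_, habel, rfl⟩

end FoxCalculus

open FoxCalculus in
/-- Let `G = 𝐅₂/N` with `w ∈ N`, and let `∂/∂x, ∂/∂y` be the Fox
derivatives on `𝐅₂ = ⟨x,y⟩` (characterized by their values on the generators and the
product rule). The map `D` sending the two generators to `π(∂w/∂x)*` and `π(∂w/∂y)*`
(where `π : ℤ[𝐅₂] → ℤ[G]` is induced by the quotient and `*` is the involution of the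
group ring) is zero if and only if `w ∈ [N, N]`. -/
theorem fox_codifferential_zero_iff_mem_commutator
    (N : Subgroup (FreeGroup (Fin 2))) [N.Normal]
    (w : FreeGroup (Fin 2)) (hw : w ∈ N)
    (Dx Dy : FreeGroup (Fin 2) → MonoidAlgebra ℤ (FreeGroup (Fin 2)))
    (hDx0 : Dx (FreeGroup.of 0) = 1) (hDx1 : Dx (FreeGroup.of 1) = 0)
    (hDxmul : ∀ u v, Dx (u * v) =
      Dx u + MonoidAlgebra.of ℤ (FreeGroup (Fin 2)) u * Dx v)
    (hDy0 : Dy (FreeGroup.of 0) = 0) (hDy1 : Dy (FreeGroup.of 1) = 1)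
    (hDymul : ∀ u v, Dy (u * v) =
      Dy u + MonoidAlgebra.of ℤ (FreeGroup (Fin 2)) u * Dy v) :
    (Finsupp.equivMapDomain (Equiv.inv (FreeGroup (Fin 2) ⧸ N))
        (MonoidAlgebra.mapDomainRingHom ℤ (QuotientGroup.mk' N) (Dx w)).coeff = 0 ∧
     Finsupp.equivMapDomain (Equiv.inv (FreeGroup (Fin 2) ⧸ N))
        (MonoidAlgebra.mapDomainRingHom ℤ (QuotientGroup.mk' N) (Dy w)).coeff = 0) ↔
      w ∈ ⁅N, N⁆ := by
  have hinvolution (l : MonoidAlgebra ℤ (FreeGroup (Fin 2) ⧸ N)) :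
      Finsupp.equivMapDomain (Equiv.inv _) l.coeff = 0 ↔ l = 0 :=
    ((Finsupp.equivCongrLeft _).injective.eq_iff' Finsupp.equivMapDomain_zero).trans coeff_eq_zero
  rw [hinvolution, hinvolution]
  constructor
  · rintro ⟨hx, hy⟩
    refine mem_commutator_of_mapDomain_mk'_fox_eq_zero N (D := ![Dx, Dy])
      (Fin.forall_fin_two.mpr ⟨hDxmul, hDymul⟩) ?_ hw (Fin.forall_fin_two.mpr ⟨hx, hy⟩)
    simp [Fin.forall_fin_two, hDx0, hDx1, hDy0, hDy1]
  · intro hcomm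
    exact ⟨IsFoxDerivation.mapDomain_mk'_eq_zero_of_mem_commutator N hDxmul hcomm,
      IsFoxDerivation.mapDomain_mk'_eq_zero_of_mem_commutator N hDymul hcomm⟩
end
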